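/- arXiv:2504.13230 — 3 statements merged into one kernel-verified Lean document; each statement's English description precedes it below -/
import Mathlib

section
/- The set of perfect squares contains no nontrivial 4-term arithmetic progression: there do not exist natural numbers a and d with d > 0 such that a, a+d, a+2d, a+3d are all perfect squares. -/
private lemma sq_par (k : ℕ) : k * k % 2 = k % 2 := by
  rcases Nat.even_or_odd k with ⟨j, rfl⟩ | ⟨j, rfl⟩
  · have : (j + j) * (j + j) = 2 * (j * (j + j)) := by ring
    omega
  · have : (2 * j + 1) * (2 * j + 1) = 2 * (2 * j * j + 2 * j) + 1 := by ring
    omega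

private lemma odd_sq_mod8 {n : ℕ} (h : n % 2 = 1) : n * n % 8 = 1 := by
  obtain ⟨k, rfl⟩ : ∃ k, n = 2 * k + 1 := ⟨n / 2, by omega⟩
  have h1 : (2*k+1) * (2*k+1) = 4 * (k*k) + 4 * k + 1 := by ring
  have h2 := sq_par k
  omega

private lemma even_sq_mod4 {n : ℕ} (h : n % 2 = 0) : n * n % 4 = 0 := by
  obtain ⟨k, rfl⟩ : ∃ k, n = 2 * k := ⟨n / 2, by omega⟩
  have h1 : (2*k) * (2*k) = 4 * (k*k) := by ring
  omega

private lemma sq_mod4 (n : ℕ) : n * n % 4 = 0 ∨ n * n % 4 = 1 := by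
  rcases Nat.even_or_odd n with h | h
  · left; exact even_sq_mod4 (Nat.even_iff.mp h)
  · right; have := odd_sq_mod8 (Nat.odd_iff.mp h); omega

private lemma nat_sq_of_coprime {α β c : ℕ} (hα : 0 < α) (hco : Nat.Coprime α β)
    (h : α * β = c * c) : ∃ p, α = p * p := by
  have hic : IsCoprime (α : ℤ) (β : ℤ) := Nat.isCoprime_iff_coprime.mpr hco
  have heq : (α : ℤ) * (β : ℤ) = (c : ℤ) ^ 2 := by
    zify at h; linear_combination h
  obtain ⟨a0, ha0 | ha0⟩ := Int.sq_of_isCoprime hic heq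
  · refine ⟨a0.natAbs, ?_⟩
    have h2 : ((a0.natAbs * a0.natAbs : ℕ) : ℤ) = (α : ℤ) := by
      push_cast
      rw [abs_mul_abs_self, ha0]; ring
    exact_mod_cast h2.symm
  · exfalso
    have h1 : (0:ℤ) < α := by exact_mod_cast hα
    nlinarith [sq_nonneg a0]

private lemma nat_sq_of_coprime' {α β c : ℕ} (hα : 0 < α) (hβ : 0 < β) (hco : Nat.Coprime α β)
    (h : α * β = c * c) : ∃ p q, α = p * p ∧ β = q * q := by
  obtain ⟨p, hp⟩ := nat_sq_of_coprime hα hco h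
  obtain ⟨q, hq⟩ := nat_sq_of_coprime hβ hco.symm (by rw [mul_comm]; exact h)
  exact ⟨p, q, hp, hq⟩

private lemma prime_dvd_of_dvd_sq {p x : ℕ} (hp : p.Prime) (h : p ∣ x * x) : p ∣ x :=
  ((Nat.Prime.dvd_mul hp).mp h).elim id id

private lemma odd_prime_dvd4 {p x : ℕ} (hp : p.Prime) (hp2 : p ≠ 2) (h : p ∣ 4 * x) :
    p ∣ x := by
  rcases (Nat.Prime.dvd_mul hp).mp h with h4 | hx
  · exfalso
    have hp4 : p ∣ 2 * 2 := by simpa using h4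
    have hpp : p ∣ 2 := ((Nat.Prime.dvd_mul hp).mp hp4).elim id id
    exact hp2 ((Nat.prime_dvd_prime_iff_eq hp Nat.prime_two).mp hpp)
  · exact hx

private lemma coprime_of_no_prime {u v : ℕ}
    (h : ∀ p : ℕ, p.Prime → p ∣ u → p ∣ v → False) : Nat.Coprime u v := by
  by_contra hnc
  obtain ⟨p, hp, h1, h2⟩ := Nat.Prime.not_coprime_iff_dvd.mp hnc
  exact h p hp h1 h2

private lemma conic {A B : ℕ} (hA : 0 < A) (hB : 0 < B) (hco : Nat.Coprime A B)
    (h3 : ¬ (3 ∣ B)) {c : ℤ}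
    (h : (3 * (A:ℤ)^2 - (B:ℤ)^2) * ((A:ℤ)^2 + (B:ℤ)^2) = c^2) :
    A = B ∨ ∃ a' d' : ℕ, 0 < d' ∧ 2 * d' ≤ A*A + B*B ∧ IsSquare a' ∧
      IsSquare (a' + d') ∧ IsSquare (a' + 2*d') ∧ IsSquare (a' + 3*d') := by
  have hS2 : (0:ℤ) < (A:ℤ)^2 + (B:ℤ)^2 := by positivity
  have hS1 : (0:ℤ) ≤ 3 * (A:ℤ)^2 - (B:ℤ)^2 := by
    by_contra hneg
    push_neg at hneg
    nlinarith [sq_nonneg c]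
  have hBA : B * B ≤ 3 * (A * A) := by
    have h2 : ((B*B : ℕ) : ℤ) ≤ ((3*(A*A) : ℕ) : ℤ) := by push_cast; nlinarith
    exact_mod_cast h2
  obtain ⟨s1, hs1⟩ : ∃ s1, B * B + s1 = 3 * (A * A) := ⟨3*(A*A) - B*B, by omega⟩
  have hz1 : (s1 : ℤ) = 3 * (A:ℤ)^2 - (B:ℤ)^2 := by
    have h2 := hs1; zify at h2; push_cast; nlinarith [h2]
  have hprod : s1 * (A*A + B*B) = c.natAbs * c.natAbs := by
    have hcast : ((s1 * (A*A + B*B) : ℕ) : ℤ) = ((c.natAbs * c.natAbs : ℕ) : ℤ) := by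
      push_cast
      rw [abs_mul_abs_self]
      linear_combination h + ((A:ℤ)^2+(B:ℤ)^2) * hz1
    exact_mod_cast hcast
  have hs1pos : 0 < s1 := by
    rcases Nat.eq_zero_or_pos s1 with h0 | h0
    · exfalso
      have h33 : 3 ∣ B * B := ⟨A*A, by omega⟩
      exact h3 (prime_dvd_of_dvd_sq (by norm_num) h33)
    · exact h0
  have hs2pos : 0 < A*A + B*B := by positivity
  rcases Nat.even_or_odd A with hApar | hApar <;> rcases Nat.even_or_odd B with hBpar | hBpar
  -- case both even : impossible
  · exfalso
    have h2g : 2 ∣ Nat.gcd A B :=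
      Nat.dvd_gcd (Nat.dvd_of_mod_eq_zero (Nat.even_iff.mp hApar)) (Nat.dvd_of_mod_eq_zero (Nat.even_iff.mp hBpar))
    rw [hco] at h2g
    omega
  -- case A even, B odd : contradiction via mod 4
  · exfalso
    have hA4 : A * A % 4 = 0 := even_sq_mod4 (Nat.even_iff.mp hApar)
    have hB8 : B * B % 8 = 1 := odd_sq_mod8 (Nat.odd_iff.mp hBpar)
    have hcop12 : Nat.Coprime s1 (A*A + B*B) := by
      apply coprime_of_no_prime
      intro p hp hp1 hp2'
      have hpodd : p ≠ 2 := by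
        rintro rfl
        obtain ⟨k, hk⟩ := hp2'
        omega
      have hpA : p ∣ A := by
        apply prime_dvd_of_dvd_sq hp
        apply odd_prime_dvd4 hp hpodd
        have he : 4 * (A*A) = s1 + (A*A + B*B) := by omega
        rw [he]; exact Nat.dvd_add hp1 hp2'
      have hpB : p ∣ B := by
        apply prime_dvd_of_dvd_sq hp
        apply odd_prime_dvd4 hp hpodd
        have hd3 : p ∣ 3 * (A*A + B*B) := Dvd.dvd.mul_left hp2' 3
        have hd : p ∣ 3 * (A*A + B*B) - s1 := Nat.dvd_sub hd3 hp1
        have he : 3 * (A*A + B*B) - s1 = 4 * (B*B) := by omega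
        rwa [he] at hd
      have hg := Nat.le_of_dvd one_pos (hco ▸ Nat.dvd_gcd hpA hpB)
      have := hp.two_le
      omega
    obtain ⟨q, pp, hq, hpp⟩ := nat_sq_of_coprime' hs1pos hs2pos hcop12 hprod
    rcases sq_mod4 q with hq4 | hq4 <;> omega
  -- case A odd, B even : contradiction via mod 4
  · exfalso
    have hA8 : A * A % 8 = 1 := odd_sq_mod8 (Nat.odd_iff.mp hApar)
    have hB4 : B * B % 4 = 0 := even_sq_mod4 (Nat.even_iff.mp hBpar)
    have hcop12 : Nat.Coprime s1 (A*A + B*B) := by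
      apply coprime_of_no_prime
      intro p hp hp1 hp2'
      have hpodd : p ≠ 2 := by
        rintro rfl
        obtain ⟨k, hk⟩ := hp2'
        omega
      have hpA : p ∣ A := by
        apply prime_dvd_of_dvd_sq hp
        apply odd_prime_dvd4 hp hpodd
        have he : 4 * (A*A) = s1 + (A*A + B*B) := by omega
        rw [he]; exact Nat.dvd_add hp1 hp2'
      have hpB : p ∣ B := by
        apply prime_dvd_of_dvd_sq hp
        apply odd_prime_dvd4 hp hpodd
        have hd3 : p ∣ 3 * (A*A + B*B) := Dvd.dvd.mul_left hp2' 3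
        have hd : p ∣ 3 * (A*A + B*B) - s1 := Nat.dvd_sub hd3 hp1
        have he : 3 * (A*A + B*B) - s1 = 4 * (B*B) := by omega
        rwa [he] at hd
      have hg := Nat.le_of_dvd one_pos (hco ▸ Nat.dvd_gcd hpA hpB)
      have := hp.two_le
      omega
    obtain ⟨q, pp, hq, hpp⟩ := nat_sq_of_coprime' hs1pos hs2pos hcop12 hprod
    rcases sq_mod4 q with hq4 | hq4 <;> omega
  -- case both odd : descent
  · have hA8 : A * A % 8 = 1 := odd_sq_mod8 (Nat.odd_iff.mp hApar)
    have hB8 : B * B % 8 = 1 := odd_sq_mod8 (Nat.odd_iff.mp hBpar)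
    obtain ⟨s, hs⟩ : ∃ s, s1 = 2 * s := ⟨s1 / 2, by omega⟩
    obtain ⟨r, hr⟩ : ∃ r, A*A + B*B = 2 * r := ⟨(A*A + B*B) / 2, by omega⟩
    have hsodd : s % 2 = 1 := by omega
    have hrodd : r % 2 = 1 := by omega
    have hceven : c.natAbs % 2 = 0 := by
      rcases Nat.even_or_odd c.natAbs with hc | hc
      · exact Nat.even_iff.mp hc
      · exfalso
        have := odd_sq_mod8 (Nat.odd_iff.mp hc)
        have he : s1 * (A*A + B*B) = 4 * (s * r) := by rw [hs, hr]; ring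
        omega
    obtain ⟨c', hc'⟩ : ∃ c', c.natAbs = 2 * c' := ⟨c.natAbs / 2, by omega⟩
    have hsr : s * r = c' * c' := by
      have he : s1 * (A*A + B*B) = 4 * (s * r) := by rw [hs, hr]; ring
      have he2 : c.natAbs * c.natAbs = 4 * (c' * c') := by rw [hc']; ring
      omega
    have hspos : 0 < s := by omega
    have hrpos : 0 < r := by omega
    have hcopsr : Nat.Coprime s r := by
      apply coprime_of_no_prime
      intro p hp hps hpr
      have hpodd : p ≠ 2 := by
        rintro rfl
        obtain ⟨k, hk⟩ := hps
        omega
      have hpA : p ∣ A := by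
        apply prime_dvd_of_dvd_sq hp
        have hd : p ∣ r + s := Nat.dvd_add hpr hps
        have he : r + s = 2 * (A * A) := by omega
        rw [he] at hd
        rcases (Nat.Prime.dvd_mul hp).mp hd with h2 | hAA
        · exact absurd ((Nat.prime_dvd_prime_iff_eq hp Nat.prime_two).mp h2) hpodd
        · exact hAA
      have hpB : p ∣ B := by
        apply prime_dvd_of_dvd_sq hp
        have hd3 : p ∣ 3 * r := Dvd.dvd.mul_left hpr 3
        have hd : p ∣ 3 * r - s := Nat.dvd_sub hd3 hps
        have he : 3 * r - s = 2 * (B * B) := by omega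
        rw [he] at hd
        rcases (Nat.Prime.dvd_mul hp).mp hd with h2 | hBB
        · exact absurd ((Nat.prime_dvd_prime_iff_eq hp Nat.prime_two).mp h2) hpodd
        · exact hBB
      have hg := Nat.le_of_dvd one_pos (hco ▸ Nat.dvd_gcd hpA hpB)
      have := hp.two_le
      omega
    obtain ⟨Q, P, hQ, hP⟩ := nat_sq_of_coprime' hspos hrpos hcopsr hsr
    -- now : B*B + 2*(Q*Q) = 3*(A*A)  and  A*A + B*B = 2*(P*P)
    have e1 : B*B + 2*(Q*Q) = 3*(A*A) := by omega
    have e2 : A*A + B*B = 2*(P*P) := by omega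
    by_cases hAB : A = B
    · exact Or.inl hAB
    right
    rcases Nat.lt_or_ge A B with hlt | hge
    · have hsq : A * A < B * B := Nat.mul_self_lt_mul_self_iff.mpr hlt
      obtain ⟨d', hd'⟩ : ∃ d', B * B = A * A + 2 * d' := ⟨(B*B - A*A)/2, by omega⟩
      exact ⟨Q*Q, d', by omega, by omega, ⟨Q, rfl⟩, ⟨A, by omega⟩, ⟨P, by omega⟩,
        ⟨B, by omega⟩⟩
    · have hlt : B < A := by omega
      have hsq : B * B < A * A := Nat.mul_self_lt_mul_self_iff.mpr hlt
      obtain ⟨d', hd'⟩ : ∃ d', A * A = B * B + 2 * d' := ⟨(A*A - B*B)/2, by omega⟩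
      exact ⟨B*B, d', by omega, by omega, ⟨B, rfl⟩, ⟨P, by omega⟩, ⟨A, by omega⟩,
        ⟨Q, by omega⟩⟩

/-- coprime α β with α*β = 3K² gives the 3a², b² shape. -/
private lemma factor3 {α β K : ℕ} (hα : 0 < α) (hβ : 0 < β) (hco : Nat.Coprime α β)
    (h : α * β = 3 * (K * K)) :
    ∃ a b, Nat.Coprime a b ∧ ¬ (3 ∣ b) ∧ a * b = K ∧ α + β = 3 * (a * a) + b * b := by
  have h3 : (3 : ℕ).Prime := by norm_num
  have hd : 3 ∣ α * β := ⟨K * K, h⟩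
  rcases (Nat.Prime.dvd_mul h3).mp hd with h3a | h3b
  · obtain ⟨α₀, rfl⟩ := h3a
    have hα₀ : 0 < α₀ := by omega
    have h' : α₀ * β = K * K := by
      have h2 : 3 * (α₀ * β) = 3 * (K * K) := by rw [← h]; ring
      exact Nat.eq_of_mul_eq_mul_left (by norm_num) h2
    have hco' : Nat.Coprime α₀ β := (Nat.Coprime.coprime_dvd_left ⟨3, by ring⟩ hco)
    obtain ⟨p, q, hp, hq⟩ := nat_sq_of_coprime' hα₀ hβ hco' h'
    have hpq : p * q = K := by
      have : (p * q) * (p * q) = K * K := by rw [← h', hp, hq]; ring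
      exact Nat.mul_self_inj.mp this
    refine ⟨p, q, ?_, ?_, hpq, by rw [hp, hq]⟩
    · have : Nat.Coprime (p*p) (q*q) := by rw [← hp, ← hq]; exact hco'
      exact Nat.Coprime.coprime_dvd_left (Dvd.intro p rfl)
        (Nat.Coprime.coprime_dvd_right ⟨q, rfl⟩ this)
    · intro h3q
      have hq3 : 3 ∣ β := by rw [hq]; exact Dvd.dvd.mul_right h3q q
      have h3α : 3 ∣ 3 * α₀ := ⟨α₀, rfl⟩
      have h31 : (3:ℕ) ∣ 1 := hco ▸ Nat.dvd_gcd h3α hq3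
      omega
  · obtain ⟨β₀, rfl⟩ := h3b
    have hβ₀ : 0 < β₀ := by omega
    have h' : α * β₀ = K * K := by
      have h2 : 3 * (α * β₀) = 3 * (K * K) := by rw [← h]; ring
      exact Nat.eq_of_mul_eq_mul_left (by norm_num) h2
    have hco' : Nat.Coprime α β₀ := (Nat.Coprime.coprime_dvd_right ⟨3, by ring⟩ hco)
    obtain ⟨p, q, hp, hq⟩ := nat_sq_of_coprime' hα hβ₀ hco' h'
    have hpq : q * p = K := by
      have : (q * p) * (q * p) = K * K := by rw [← h', hp, hq]; ring
      exact Nat.mul_self_inj.mp this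
    refine ⟨q, p, ?_, ?_, hpq, by rw [hp, hq]; ring⟩
    · have : Nat.Coprime (p*p) (q*q) := by rw [← hp, ← hq]; exact hco'
      exact (Nat.Coprime.coprime_dvd_left ⟨p, rfl⟩
        (Nat.Coprime.coprime_dvd_right ⟨q, rfl⟩ this)).symm
    · intro h3p
      have hp3 : 3 ∣ α := by rw [hp]; exact Dvd.dvd.mul_right h3p p
      have h3β : 3 ∣ 3 * β₀ := ⟨β₀, rfl⟩
      have h31 : (3:ℕ) ∣ 1 := hco ▸ Nat.dvd_gcd hp3 h3β
      omega

/-- splitting of a coprime product along a coprime product -/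
private lemma split4 {M N a b : ℕ} (hMN : Nat.Coprime M N) (hab : Nat.Coprime a b)
    (h : a * b = M * N) :
    ∃ a₁ a₂ b₁ b₂, a = a₁ * a₂ ∧ b = b₁ * b₂ ∧ M = a₁ * b₁ ∧ N = a₂ * b₂ := by
  refine ⟨Nat.gcd a M, Nat.gcd a N, Nat.gcd b M, Nat.gcd b N, ?_, ?_, ?_, ?_⟩
  · exact (Nat.gcd_mul_gcd_eq_iff_dvd_mul_of_coprime hMN).mpr ⟨b, h.symm⟩ |>.symm
  · exact (Nat.gcd_mul_gcd_eq_iff_dvd_mul_of_coprime hMN).mpr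
      ⟨a, by rw [← h]; ring⟩ |>.symm
  · rw [Nat.gcd_comm a M, Nat.gcd_comm b M]
    exact (Nat.gcd_mul_gcd_eq_iff_dvd_mul_of_coprime hab).mpr ⟨N, by rw [h]⟩ |>.symm
  · rw [Nat.gcd_comm a N, Nat.gcd_comm b N]
    exact (Nat.gcd_mul_gcd_eq_iff_dvd_mul_of_coprime hab).mpr
      ⟨M, by rw [h]; ring⟩ |>.symm

set_option maxHeartbeats 1000000 in
private lemma descend {M N a b a₁ a₂ b₁ b₂ : ℕ} {τ ε : ℤ}
    (hτ : τ = 1 ∨ τ = -1) (hε : ε = 1 ∨ ε = -1)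
    (hM : 0 < M) (hN : 0 < N) (hMN : M ≠ N)
    (hab : Nat.Coprime a b) (h3b : ¬ (3 ∣ b))
    (ha : a = a₁ * a₂) (hb : b = b₁ * b₂) (hM2 : M = a₁ * b₁) (hN2 : N = a₂ * b₂)
    (hE : (M:ℤ)^2 - 4*τ*(M:ℤ)*(N:ℤ) - (N:ℤ)^2 = ε * (3*(a:ℤ)^2 + (b:ℤ)^2)) :
    ∃ a' d' : ℕ, 0 < d' ∧ 2 * d' ≤ M*M + N*N ∧ IsSquare a' ∧
      IsSquare (a' + d') ∧ IsSquare (a' + 2*d') ∧ IsSquare (a' + 3*d') := by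
  subst ha hb hM2 hN2
  have ha₁pos : 0 < a₁ := by rcases Nat.eq_zero_or_pos a₁ with h0 | h; · subst h0; simp at hM
                             · exact h
  have hb₁pos : 0 < b₁ := by rcases Nat.eq_zero_or_pos b₁ with h0 | h; · subst h0; simp at hM
                             · exact h
  have ha₂pos : 0 < a₂ := by rcases Nat.eq_zero_or_pos a₂ with h0 | h; · subst h0; simp at hN
                             · exact h
  have hb₂pos : 0 < b₂ := by rcases Nat.eq_zero_or_pos b₂ with h0 | h; · subst h0; simp at hN
                             · exact h
  rcases hε with rfl | rfl
  · -- ε = 1, work with (A,B) = (a₁, b₂)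
    have hρ : (((a₁:ℤ)^2 - (b₂:ℤ)^2) * b₁ - 2*τ*a₁*a₂*b₂)^2
        = (a₂:ℤ)^2 * ((3*(a₁:ℤ)^2 - (b₂:ℤ)^2) * ((a₁:ℤ)^2 + (b₂:ℤ)^2)) := by
      rcases hτ with rfl | rfl <;> push_cast at hE ⊢ <;>
        linear_combination ((a₁:ℤ)^2 - (b₂:ℤ)^2) * hE
    have ha₂Z : ((a₂:ℤ)) ≠ 0 := by exact_mod_cast ha₂pos.ne'
    obtain ⟨cc, hcc⟩ : (a₂:ℤ) ∣ (((a₁:ℤ)^2 - (b₂:ℤ)^2) * b₁ - 2*τ*a₁*a₂*b₂) := by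
      have h2 : (a₂:ℤ)^2 ∣ (((a₁:ℤ)^2 - (b₂:ℤ)^2) * b₁ - 2*τ*a₁*a₂*b₂)^2 := ⟨_, hρ⟩
      exact (Int.pow_dvd_pow_iff two_ne_zero).mp h2
    have hS : (3*(a₁:ℤ)^2 - (b₂:ℤ)^2) * ((a₁:ℤ)^2 + (b₂:ℤ)^2) = cc^2 := by
      have h2 : (a₂:ℤ)^2 * ((3*(a₁:ℤ)^2 - (b₂:ℤ)^2) * ((a₁:ℤ)^2 + (b₂:ℤ)^2))
          = (a₂:ℤ)^2 * cc^2 := by rw [← hρ, hcc]; ring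
      exact mul_left_cancel₀ (pow_ne_zero 2 ha₂Z) h2
    have hcop : Nat.Coprime a₁ b₂ :=
      (Nat.Coprime.coprime_dvd_left ⟨a₂, rfl⟩ hab).coprime_dvd_right ⟨b₁, mul_comm b₁ b₂⟩
    have h3b₂ : ¬ (3 ∣ b₂) := fun hd => h3b (hd.mul_left b₁)
    rcases conic ha₁pos hb₂pos hcop h3b₂ hS with hAB | ⟨a', d', h1, h2, h3', h4, h5, h6⟩
    · exfalso
      have hb₂1 : b₂ = 1 := by
        have hx := hcop; rw [hAB] at hx; simpa [Nat.Coprime, Nat.gcd_self] using hx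
      have ha₁1 : a₁ = 1 := by omega
      subst hb₂1 ha₁1
      push_cast at hE
      ring_nf at hE
      have hNZ : (0:ℤ) < (a₂:ℤ) := by exact_mod_cast ha₂pos
      have hMZ : (0:ℤ) < (b₁:ℤ) := by exact_mod_cast hb₁pos
      rcases hτ with rfl | rfl
      · nlinarith [hE]
      · have hMeq : (b₁:ℤ) = (a₂:ℤ) := by
          have h4e : 4*(a₂:ℤ)*(b₁:ℤ) = 4*(a₂:ℤ)*(a₂:ℤ) := by nlinarith [hE]
          exact mul_left_cancel₀ (by positivity : (4:ℤ)*(a₂:ℤ) ≠ 0) h4e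
        have hba : b₁ = a₂ := by exact_mod_cast hMeq
        omega
    · refine ⟨a', d', h1, ?_, h3', h4, h5, h6⟩
      have h1le : a₁ ≤ a₁ * b₁ := Nat.le_mul_of_pos_right _ hb₁pos
      have h2le : b₂ ≤ a₂ * b₂ := Nat.le_mul_of_pos_left _ ha₂pos
      have q1 : a₁ * a₁ ≤ (a₁*b₁) * (a₁*b₁) := Nat.mul_le_mul h1le h1le
      have q2 : b₂ * b₂ ≤ (a₂*b₂) * (a₂*b₂) := Nat.mul_le_mul h2le h2le
      omega
  · -- ε = -1, work with (A,B) = (a₂, b₁)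
    have hρ : (((a₂:ℤ)^2 - (b₁:ℤ)^2) * b₂ + 2*τ*a₁*a₂*b₁)^2
        = (a₁:ℤ)^2 * ((3*(a₂:ℤ)^2 - (b₁:ℤ)^2) * ((a₂:ℤ)^2 + (b₁:ℤ)^2)) := by
      rcases hτ with rfl | rfl <;> push_cast at hE ⊢ <;>
        linear_combination (-(a₂:ℤ)^2 + (b₁:ℤ)^2) * hE
    have ha₁Z : ((a₁:ℤ)) ≠ 0 := by exact_mod_cast ha₁pos.ne'
    obtain ⟨cc, hcc⟩ : (a₁:ℤ) ∣ (((a₂:ℤ)^2 - (b₁:ℤ)^2) * b₂ + 2*τ*a₁*a₂*b₁) := by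
      have h2 : (a₁:ℤ)^2 ∣ (((a₂:ℤ)^2 - (b₁:ℤ)^2) * b₂ + 2*τ*a₁*a₂*b₁)^2 := ⟨_, hρ⟩
      exact (Int.pow_dvd_pow_iff two_ne_zero).mp h2
    have hS : (3*(a₂:ℤ)^2 - (b₁:ℤ)^2) * ((a₂:ℤ)^2 + (b₁:ℤ)^2) = cc^2 := by
      have h2 : (a₁:ℤ)^2 * ((3*(a₂:ℤ)^2 - (b₁:ℤ)^2) * ((a₂:ℤ)^2 + (b₁:ℤ)^2))
          = (a₁:ℤ)^2 * cc^2 := by rw [← hρ, hcc]; ring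
      exact mul_left_cancel₀ (pow_ne_zero 2 ha₁Z) h2
    have hcop : Nat.Coprime a₂ b₁ :=
      (Nat.Coprime.coprime_dvd_left ⟨a₁, mul_comm a₁ a₂⟩ hab).coprime_dvd_right ⟨b₂, rfl⟩
    have h3b₁ : ¬ (3 ∣ b₁) := fun hd => h3b (hd.mul_right b₂)
    rcases conic ha₂pos hb₁pos hcop h3b₁ hS with hAB | ⟨a', d', h1, h2, h3', h4, h5, h6⟩
    · exfalso
      have hb₁1 : b₁ = 1 := by
        have hx := hcop; rw [hAB] at hx; simpa [Nat.Coprime, Nat.gcd_self] using hx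
      have ha₂1 : a₂ = 1 := by omega
      subst hb₁1 ha₂1
      push_cast at hE
      ring_nf at hE
      have hNZ : (0:ℤ) < (b₂:ℤ) := by exact_mod_cast hb₂pos
      have hMZ : (0:ℤ) < (a₁:ℤ) := by exact_mod_cast ha₁pos
      rcases hτ with rfl | rfl
      · have hMeq : (a₁:ℤ) = (b₂:ℤ) := by
          have h4e : 4*(a₁:ℤ)*(a₁:ℤ) = 4*(a₁:ℤ)*(b₂:ℤ) := by nlinarith [hE]
          exact mul_left_cancel₀ (by positivity : (4:ℤ)*(a₁:ℤ) ≠ 0) h4e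
        have hba : a₁ = b₂ := by exact_mod_cast hMeq
        omega
      · nlinarith [hE]
    · refine ⟨a', d', h1, ?_, h3', h4, h5, h6⟩
      have h1le : a₂ ≤ a₂ * b₂ := Nat.le_mul_of_pos_right _ hb₂pos
      have h2le : b₁ ≤ a₁ * b₁ := Nat.le_mul_of_pos_left _ ha₁pos
      have q1 : a₂ * a₂ ≤ (a₂*b₂) * (a₂*b₂) := Nat.mul_le_mul h1le h1le
      have q2 : b₁ * b₁ ≤ (a₁*b₁) * (a₁*b₁) := Nat.mul_le_mul h2le h2le
      omega

private lemma dvd_of_sq_dvd_sq {g z : ℕ} (h : g * g ∣ z * z) : g ∣ z :=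
  (Nat.pow_dvd_pow_iff two_ne_zero).mp (by rwa [pow_two, pow_two])

set_option maxHeartbeats 2000000 in
private lemma no_ap_aux : ∀ d : ℕ, 0 < d → ∀ a : ℕ, IsSquare a → IsSquare (a + d) →
    IsSquare (a + 2*d) → IsSquare (a + 3*d) → False := by
  intro d
  induction d using Nat.strong_induction_on with
  | _ d IH =>
  intro hd a ha hy hz hw
  obtain ⟨x, hx⟩ := ha
  obtain ⟨y, hyy⟩ := hy
  obtain ⟨z, hzz⟩ := hz
  obtain ⟨w, hww⟩ := hw
  have hxy : x*x + d = y*y := by omega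
  have hyz : y*y + d = z*z := by omega
  have hzw : z*z + d = w*w := by omega
  have hxz : x*x + 2*d = z*z := by omega
  have hyw : y*y + 2*d = w*w := by omega
  clear hx hyy hzz hww
  by_cases hco : Nat.Coprime x y
  · -- main case
    -- parity analysis
    rcases Nat.even_or_odd x with hxp | hxp <;> rcases Nat.even_or_odd y with hyp | hyp
    · exfalso
      have h2g : 2 ∣ Nat.gcd x y := Nat.dvd_gcd (Nat.dvd_of_mod_eq_zero (Nat.even_iff.mp hxp))
        (Nat.dvd_of_mod_eq_zero (Nat.even_iff.mp hyp))
      rw [hco] at h2g; omega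
    · exfalso
      have h1 := even_sq_mod4 (Nat.even_iff.mp hxp)
      have h2 := odd_sq_mod8 (Nat.odd_iff.mp hyp)
      rcases sq_mod4 z with h3 | h3 <;> omega
    · exfalso
      have h1 := odd_sq_mod8 (Nat.odd_iff.mp hxp)
      have h2 := even_sq_mod4 (Nat.even_iff.mp hyp)
      rcases sq_mod4 z with h3 | h3 <;> omega
    have hxodd : x % 2 = 1 := Nat.odd_iff.mp hxp
    have hyodd : y % 2 = 1 := Nat.odd_iff.mp hyp
    have hx8 := odd_sq_mod8 hxodd
    have hy8 := odd_sq_mod8 hyodd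
    have hzodd : z % 2 = 1 := by
      rcases Nat.even_or_odd z with hzp | hzp
      · exfalso; have := even_sq_mod4 (Nat.even_iff.mp hzp); omega
      · exact Nat.odd_iff.mp hzp
    have hwodd : w % 2 = 1 := by
      rcases Nat.even_or_odd w with hwp | hwp
      · exfalso; have := even_sq_mod4 (Nat.even_iff.mp hwp); omega
      · exact Nat.odd_iff.mp hwp
    have hxpos : 0 < x := by omega
    have hypos : 0 < y := by omega
    have hzpos : 0 < z := by omega
    -- construct e, f
    have hylw : y < w := by
      have h1 : y*y < w*w := by omega
      exact Nat.mul_self_lt_mul_self_iff.mp h1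
    obtain ⟨f, hf⟩ : ∃ f, w = y + 2*f := ⟨(w - y)/2, by omega⟩
    have hfpos : 0 < f := by omega
    obtain ⟨e, he⟩ : ∃ e, e = y + f := ⟨y + f, rfl⟩
    have hepos : 0 < e := by omega
    have hd2 : d = 2*(e*f) := by
      have hZ : ((d:ℤ)) = 2*((e:ℤ)*(f:ℤ)) := by
        have hywZ : ((y:ℤ))*y + 2*d = ((w:ℤ))*w := by exact_mod_cast hyw
        have hfZ : ((w:ℤ)) = y + 2*f := by exact_mod_cast hf
        have heZ : ((e:ℤ)) = y + f := by exact_mod_cast he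
        have h2Z : 2*((d:ℤ)) = 4*((e:ℤ)*(f:ℤ)) := by
          linear_combination hywZ + (-4*(f:ℤ))*heZ + ((w:ℤ)+(y:ℤ)+2*(f:ℤ))*hfZ
        linarith
      exact_mod_cast hZ
    have hez : e*e + f*f = z*z := by
      have hZ : ((e:ℤ))*e + (f:ℤ)*f = (z:ℤ)*z := by
        have hyzZ : ((y:ℤ))*y + d = (z:ℤ)*z := by exact_mod_cast hyz
        have hdZ2 : ((d:ℤ)) = 2*((e:ℤ)*f) := by exact_mod_cast hd2
        have heZ : ((e:ℤ)) = y + f := by exact_mod_cast he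
        linear_combination hyzZ - hdZ2 + ((e:ℤ) - f + y)*heZ
      exact_mod_cast hZ
    have hcoef : Nat.Coprime e f := by
      apply coprime_of_no_prime
      intro p hp hpe hpf
      have hpy : p ∣ y := by
        have h1 := Nat.dvd_sub hpe hpf
        have h2 : e - f = y := by omega
        rwa [h2] at h1
      have hpw : p ∣ w := by
        have h2 : w = e + f := by omega
        rw [h2]; exact Nat.dvd_add hpe hpf
      have hpodd : p ≠ 2 := by rintro rfl; obtain ⟨k, hk⟩ := hpy; omega
      have hpp2d : p*p ∣ 2*d := by
        have h1 : p*p ∣ w*w := Nat.mul_dvd_mul hpw hpw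
        have h2 : p*p ∣ y*y := Nat.mul_dvd_mul hpy hpy
        have h3 := Nat.dvd_sub h1 h2
        have h4 : w*w - y*y = 2*d := by omega
        rwa [h4] at h3
      have hppd : p*p ∣ d := by
        have hcop2 : Nat.Coprime (p*p) 2 := by
          have h1 : Nat.Coprime p 2 := (Nat.coprime_primes hp Nat.prime_two).mpr hpodd
          exact Nat.Coprime.mul h1 h1
        exact hcop2.dvd_of_dvd_mul_left hpp2d
      have hppx : p*p ∣ x*x := by
        have h2 : p*p ∣ y*y := Nat.mul_dvd_mul hpy hpy
        have h3 := Nat.dvd_sub h2 hppd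
        have h4 : y*y - d = x*x := by omega
        rwa [h4] at h3
      have hpx : p ∣ x := dvd_of_sq_dvd_sq hppx
      have hgle := Nat.le_of_dvd one_pos (hco ▸ Nat.dvd_gcd hpx hpy)
      have := hp.two_le; omega
    have htrip : PythagoreanTriple (e:ℤ) (f:ℤ) (z:ℤ) := by
      have h0 : ((e:ℤ))*e + (f:ℤ)*f = (z:ℤ)*z := by exact_mod_cast hez
      exact h0
    have hgcdef : Int.gcd (e:ℤ) (f:ℤ) = 1 := by
      rw [Int.gcd_natCast_natCast]; exact hcoef
    obtain ⟨m, n, hmn1, hmn2, hmn3, hmn4⟩ :=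
      PythagoreanTriple.coprime_classification.mp ⟨htrip, hgcdef⟩
    have hzZ : (z:ℤ) = m^2 + n^2 := by
      rcases hmn2 with h | h
      · exact h
      · exfalso
        have h1 : (0:ℤ) < z := by exact_mod_cast hzpos
        linarith [sq_nonneg m, sq_nonneg n, h]
    have hefZ : (e:ℤ)*(f:ℤ) = 2*m*n*(m^2 - n^2) := by
      rcases hmn1 with ⟨h1, h2⟩ | ⟨h1, h2⟩ <;> rw [h1, h2] <;> ring
    have hdZ : (d:ℤ) = 4*(m*n)*(m^2 - n^2) := by
      have h1 : ((d:ℤ)) = 2*((e:ℤ)*(f:ℤ)) := by exact_mod_cast hd2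
      rw [h1, hefZ]; ring
    have hX : (m^2 - 4*m*n - n^2)^2 = (x:ℤ)^2 + 12*(m*n)^2 := by
      have hxzZ : ((x:ℤ))*x + 2*d = (z:ℤ)*z := by exact_mod_cast hxz
      linear_combination (-(z:ℤ) - m^2 - n^2)*hzZ + 2*hdZ - hxzZ
    -- natural number versions
    set M := m.natAbs with hMdef
    set N := n.natAbs with hNdef
    set K := (m*n).natAbs with hKdef
    set L := (m^2 - n^2).natAbs with hLdef
    set G := (m^2 - 4*m*n - n^2).natAbs with hGdef
    have hefpos : 0 < e*f := Nat.mul_pos hepos hfpos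
    have hefZpos : (0:ℤ) < 2*m*n*(m^2 - n^2) := by
      rw [← hefZ]; exact_mod_cast hefpos
    have hm0 : m ≠ 0 := by rintro rfl; simp at hefZpos
    have hn0 : n ≠ 0 := by rintro rfl; simp at hefZpos
    have hm2n2 : m^2 ≠ n^2 := by
      intro hq; rw [hq] at hefZpos; simp at hefZpos
    have Mpos : 0 < M := Int.natAbs_pos.mpr hm0
    have Npos : 0 < N := Int.natAbs_pos.mpr hn0
    have hmM : (m:ℤ)^2 = ((M:ℕ):ℤ)^2 := by rw [← sq_abs m, Int.abs_eq_natAbs]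
    have hnN : (n:ℤ)^2 = ((N:ℕ):ℤ)^2 := by rw [← sq_abs n, Int.abs_eq_natAbs]
    have hMN : M ≠ N := by
      intro hq
      apply hm2n2
      rw [hmM, hnN, hq]
    have hKMN : K = M*N := Int.natAbs_mul m n
    have Kpos : 0 < K := Int.natAbs_pos.mpr (mul_ne_zero hm0 hn0)
    have hGZ2 : ((G:ℕ):ℤ)*((G:ℕ):ℤ) = (m^2 - 4*m*n - n^2)*(m^2 - 4*m*n - n^2) := by
      rw [hGdef, Int.natCast_natAbs, abs_mul_abs_self]
    have hKZ2 : ((K:ℕ):ℤ)*((K:ℕ):ℤ) = (m*n)*(m*n) := by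
      rw [hKdef, Int.natCast_natAbs, abs_mul_abs_self]
    have hGsq : G*G = x*x + 12*(K*K) := by
      have hc : ((G*G : ℕ):ℤ) = ((x*x + 12*(K*K) : ℕ):ℤ) := by
        push_cast
        rw [hGZ2, hKZ2]
        linear_combination hX
      exact_mod_cast hc
    have hGodd : G % 2 = 1 := by
      rcases Nat.even_or_odd G with hG | hG
      · exfalso
        have h1 : (2:ℕ) ∣ G := Nat.dvd_of_mod_eq_zero (Nat.even_iff.mp hG)
        have h2X : ((2:ℕ):ℤ) ∣ (m^2 - 4*m*n - n^2) := Int.natCast_dvd.mpr h1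
        have h2z : ((2:ℕ):ℤ) ∣ (z:ℤ) := by
          have h3 : (z:ℤ) = (m^2 - 4*m*n - n^2) + 2*(2*m*n + n^2) := by rw [hzZ]; ring
          rw [h3]
          exact dvd_add h2X (by norm_num : ((2:ℕ):ℤ) ∣ 2*(2*m*n + n^2))
        have h4 : (2:ℕ) ∣ z := by exact_mod_cast h2z
        omega
      · exact Nat.odd_iff.mp hG
    have hxltG : x < G := by
      have h1 : 1 ≤ K*K := Nat.mul_le_mul Kpos Kpos
      have h2 : x*x < G*G := by omega
      exact Nat.mul_self_lt_mul_self_iff.mp h2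
    have hcopGx : Nat.Coprime G x := by
      apply coprime_of_no_prime
      intro p hp hpG hpx
      have hpodd : p ≠ 2 := by rintro rfl; obtain ⟨k, hk⟩ := hpx; omega
      have hpXZ : ((p:ℕ):ℤ) ∣ (m^2 - 4*m*n - n^2) := Int.natCast_dvd.mpr hpG
      have hpM : ¬ p ∣ M := by
        intro hpM
        have hpmZ : ((p:ℕ):ℤ) ∣ m := Int.natCast_dvd.mpr hpM
        have hpn2 : ((p:ℕ):ℤ) ∣ n^2 := by
          have h1 : ((p:ℕ):ℤ) ∣ (m*(m - 4*n) - (m^2 - 4*m*n - n^2)) :=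
            dvd_sub (hpmZ.mul_right _) hpXZ
          have h2 : m*(m - 4*n) - (m^2 - 4*m*n - n^2) = n^2 := by ring
          rwa [h2] at h1
        have hpN : p ∣ N := by
          have h1 : p ∣ (n^2).natAbs := Int.natCast_dvd.mp hpn2
          have h2 : (n^2).natAbs = N*N := by rw [pow_two, Int.natAbs_mul]
          rw [h2] at h1
          exact prime_dvd_of_dvd_sq hp h1
        have h3 : p ∣ Nat.gcd M N := Nat.dvd_gcd hpM hpN
        have h4 : Nat.gcd M N = 1 := hmn3
        rw [h4] at h3
        have := hp.two_le
        have := Nat.le_of_dvd one_pos h3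
        omega
      have hpN : ¬ p ∣ N := by
        intro hpN
        have hpnZ : ((p:ℕ):ℤ) ∣ n := Int.natCast_dvd.mpr hpN
        have hpm2 : ((p:ℕ):ℤ) ∣ m^2 := by
          have h1 : ((p:ℕ):ℤ) ∣ ((m^2 - 4*m*n - n^2) + n*(4*m + n)) :=
            dvd_add hpXZ (hpnZ.mul_right _)
          have h2 : (m^2 - 4*m*n - n^2) + n*(4*m + n) = m^2 := by ring
          rwa [h2] at h1
        have hpM' : p ∣ M := by
          have h1 : p ∣ (m^2).natAbs := Int.natCast_dvd.mp hpm2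
          have h2 : (m^2).natAbs = M*M := by rw [pow_two, Int.natAbs_mul]
          rw [h2] at h1
          exact prime_dvd_of_dvd_sq hp h1
        exact hpM hpM'
      have hpK : Nat.Coprime p K := by
        rw [hKMN]
        exact Nat.Coprime.mul_right ((Nat.Prime.coprime_iff_not_dvd hp).mpr hpM)
          ((Nat.Prime.coprime_iff_not_dvd hp).mpr hpN)
      have hpp12 : p*p ∣ 12 := by
        have h1 : p*p ∣ G*G := Nat.mul_dvd_mul hpG hpG
        have h2 : p*p ∣ x*x := Nat.mul_dvd_mul hpx hpx
        have h3 := Nat.dvd_sub h1 h2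
        have h4 : G*G - x*x = 12*(K*K) := by omega
        rw [h4] at h3
        have h5 : Nat.Coprime (p*p) (K*K) :=
          Nat.Coprime.mul_right (hpK.mul hpK) (hpK.mul hpK)
        exact h5.dvd_of_dvd_mul_right h3
      have hple : p ≤ 3 := by
        by_contra hc
        push_neg at hc
        have h16 : 4*4 ≤ p*p := Nat.mul_le_mul (by omega) (by omega)
        have := Nat.le_of_dvd (by norm_num) hpp12
        omega
      have hp3 : p = 3 := by have := hp.two_le; omega
      rw [hp3] at hpp12
      omega
    obtain ⟨α, hα⟩ : ∃ α, G = x + 2*α := ⟨(G - x)/2, by omega⟩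
    have hαpos : 0 < α := by omega
    have hαβ : α*(x + α) = 3*(K*K) := by
      have hZ4 : (4:ℤ)*((α:ℤ)*((x:ℤ) + α)) = 4*(3*((K:ℤ)*K)) := by
        have h1 : ((G:ℕ):ℤ) = (x:ℤ) + 2*α := by exact_mod_cast hα
        have h2 : ((G:ℕ):ℤ)*((G:ℕ):ℤ) = (x:ℤ)*x + 12*((K:ℤ)*K) := by exact_mod_cast hGsq
        rw [h1] at h2
        linear_combination h2
      have h3 := mul_left_cancel₀ (by norm_num : (4:ℤ) ≠ 0) hZ4
      exact_mod_cast h3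
    have hcopαβ : Nat.Coprime α (x + α) := by
      apply coprime_of_no_prime
      intro p hp hpα hpβ
      have hpx : p ∣ x := by
        have h1 := Nat.dvd_sub hpβ hpα
        have h2 : x + α - α = x := by omega
        rwa [h2] at h1
      have hpG : p ∣ G := by
        have h2 : G = (x + α) + α := by omega
        rw [h2]; exact Nat.dvd_add hpβ hpα
      have h3 := Nat.le_of_dvd one_pos (hcopGx ▸ Nat.dvd_gcd hpG hpx)
      have := hp.two_le; omega
    obtain ⟨A, B, hABco, h3B, hABK, hsum⟩ := factor3 hαpos (by omega : 0 < x + α) hcopαβ hαβ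
    have hGAB : G = 3*(A*A) + B*B := by omega
    obtain ⟨a₁, a₂, b₁, b₂, hA12, hB12, hM12, hN12⟩ :=
      split4 (show Nat.Coprime M N from hmn3) hABco (by rw [hABK, hKMN])
    -- size bound
    have hdKL : d = 4*(K*L) := by
      have h1 := congrArg Int.natAbs hdZ
      simpa [Int.natAbs_mul, hKdef, hLdef, mul_assoc] using h1
    have hLge : M + N ≤ L := by
      have hmM' : (m:ℤ)^2 = ((M*M : ℕ):ℤ) := by rw [hmM]; push_cast; ring
      have hnN' : (n:ℤ)^2 = ((N*N : ℕ):ℤ) := by rw [hnN]; push_cast; ring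
      rcases Int.natAbs_eq (m^2 - n^2) with hL1 | hL1
      · -- m² - n² = L : M > N case
        have h1 : ((M*M:ℕ):ℤ) = ((L + N*N : ℕ):ℤ) := by
          push_cast
          push_cast at hmM' hnN'
          rw [← hLdef] at hL1
          linear_combination -hmM' + hnN' + hL1
        have h2 : M*M = L + N*N := by exact_mod_cast h1
        have h3 : N < M := by
          rcases Nat.lt_or_ge N M with h | h
          · exact h
          · exfalso
            have h4 : M*M ≤ N*N := Nat.mul_le_mul h h
            have hL0 : L = 0 := by omega
            have : M*M = N*N := by omega
            exact hMN (Nat.mul_self_inj.mp this)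
        have h5 : M*(N+1) ≤ M*M := Nat.mul_le_mul_left M h3
        have h6 : N*(N+1) ≤ N*M := Nat.mul_le_mul_left N h3
        have e1 : M*(N+1) = M*N + M := by ring
        have e2 : N*(N+1) = N*N + N := by ring
        have e3 : N*M = M*N := by ring
        omega
      · -- n² - m² = L : N > M case
        have h1 : ((N*N:ℕ):ℤ) = ((L + M*M : ℕ):ℤ) := by
          push_cast
          push_cast at hmM' hnN'
          rw [← hLdef] at hL1
          linear_combination hmM' - hnN' - hL1
        have h2 : N*N = L + M*M := by exact_mod_cast h1
        have h3 : M < N := by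
          rcases Nat.lt_or_ge M N with h | h
          · exact h
          · exfalso
            have h4 : N*N ≤ M*M := Nat.mul_le_mul h h
            have hL0 : L = 0 := by omega
            have : M*M = N*N := by omega
            exact hMN (Nat.mul_self_inj.mp this)
        have h5 : N*(M+1) ≤ N*N := Nat.mul_le_mul_left N h3
        have h6 : M*(M+1) ≤ M*N := Nat.mul_le_mul_left M h3
        have e1 : N*(M+1) = N*M + N := by ring
        have e2 : M*(M+1) = M*M + M := by ring
        have e3 : N*M = M*N := by ring
        omega
    have hsize : M*M + N*N < 2*d := by
      have t1 : M*N*(M+N) ≤ M*N*L := Nat.mul_le_mul_left (M*N) hLge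
      have t2 : M*N*(M+N) = M*M*N + M*(N*N) := by ring
      have t5 : M*M ≤ M*M*N := Nat.le_mul_of_pos_right _ Npos
      have t6 : N*N ≤ M*(N*N) := Nat.le_mul_of_pos_left _ Mpos
      have t7 : d = 4*(M*N*L) := by rw [hdKL, hKMN]
      omega
    -- the final application
    have happly : ∀ (τ ε : ℤ), (τ = 1 ∨ τ = -1) → (ε = 1 ∨ ε = -1) →
        ((M:ℤ)^2 - 4*τ*(M:ℤ)*(N:ℤ) - (N:ℤ)^2 = ε*(3*(A:ℤ)^2 + (B:ℤ)^2)) → False := by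
      intro τ ε hτ hε hE
      obtain ⟨a', d', hd'pos, hbnd, s1, s2, s3, s4⟩ :=
        descend hτ hε Mpos Npos hMN hABco h3B hA12 hB12 hM12 hN12 hE
      exact IH d' (by omega) (by omega) a' s1 s2 s3 s4
    have hGZ : ((G:ℕ):ℤ) = 3*(A:ℤ)^2 + (B:ℤ)^2 := by
      have h0 : ((G:ℕ):ℤ) = ((3*(A*A) + B*B : ℕ):ℤ) := Nat.cast_inj.mpr hGAB
      push_cast at h0
      linear_combination h0
    have hmabs : m = ((M:ℕ):ℤ) ∨ m = -((M:ℕ):ℤ) := Int.natAbs_eq m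
    have hnabs : n = ((N:ℕ):ℤ) ∨ n = -((N:ℕ):ℤ) := Int.natAbs_eq n
    have hXabs : (m^2 - 4*m*n - n^2) = ((G:ℕ):ℤ) ∨ (m^2 - 4*m*n - n^2) = -((G:ℕ):ℤ) :=
      Int.natAbs_eq _
    rcases hmabs with hm | hm <;> rcases hnabs with hn | hn <;>
      rcases hXabs with hXe | hXe <;> rw [hm, hn] at hXe <;>
      [ exact happly 1 1 (Or.inl rfl) (Or.inl rfl) (by linear_combination hXe + hGZ);
        exact happly 1 (-1) (Or.inl rfl) (Or.inr rfl) (by linear_combination hXe - hGZ);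
        exact happly (-1) 1 (Or.inr rfl) (Or.inl rfl) (by linear_combination hXe + hGZ);
        exact happly (-1) (-1) (Or.inr rfl) (Or.inr rfl) (by linear_combination hXe - hGZ);
        exact happly (-1) 1 (Or.inr rfl) (Or.inl rfl) (by linear_combination hXe + hGZ);
        exact happly (-1) (-1) (Or.inr rfl) (Or.inr rfl) (by linear_combination hXe - hGZ);
        exact happly 1 1 (Or.inl rfl) (Or.inl rfl) (by linear_combination hXe + hGZ);
        exact happly 1 (-1) (Or.inl rfl) (Or.inr rfl) (by linear_combination hXe - hGZ) ]
  · -- gcd descent case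
    have hg0 : Nat.gcd x y ≠ 0 := by
      intro h0
      have hx0 : x = 0 := Nat.eq_zero_of_gcd_eq_zero_left h0
      have hy0 : y = 0 := Nat.eq_zero_of_gcd_eq_zero_right h0
      subst hx0; subst hy0
      simp at hxy
      omega
    have hg2 : 2 ≤ Nat.gcd x y := by
      rcases Nat.lt_or_ge (Nat.gcd x y) 2 with h | h
      · exfalso
        interval_cases hgg : Nat.gcd x y
        · exact hg0 rfl
        · exact hco hgg
      · exact h
    obtain ⟨x', hx'⟩ : Nat.gcd x y ∣ x := Nat.gcd_dvd_left x y
    obtain ⟨y', hy'⟩ : Nat.gcd x y ∣ y := Nat.gcd_dvd_right x y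
    set g := Nat.gcd x y with hgdef
    have hggd : g*g ∣ d := by
      have h1 : g*g ∣ y*y := by rw [hy']; exact Nat.mul_dvd_mul ⟨y', rfl⟩ ⟨y', rfl⟩
      have h2 : g*g ∣ x*x := by rw [hx']; exact Nat.mul_dvd_mul ⟨x', rfl⟩ ⟨x', rfl⟩
      have h3 : g*g ∣ y*y - x*x := Nat.dvd_sub h1 h2
      have h4 : y*y - x*x = d := by omega
      rwa [h4] at h3
    obtain ⟨d', hd'⟩ := hggd
    have hgg4 : 4 ≤ g*g := Nat.mul_le_mul hg2 hg2
    have hd'pos : 0 < d' := by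
      rcases Nat.eq_zero_or_pos d' with rfl | h
      · simp at hd'; omega
      · exact h
    have hd'lt : d' < d := by
      have h4 : 4*d' ≤ g*g*d' := Nat.mul_le_mul_right d' hgg4
      omega
    -- get z', w'
    have hgz : g ∣ z := by
      apply dvd_of_sq_dvd_sq
      have h2 : g*g ∣ x*x := by rw [hx']; exact Nat.mul_dvd_mul ⟨x', rfl⟩ ⟨x', rfl⟩
      have : g*g ∣ x*x + 2*d := by
        exact Nat.dvd_add h2 (Dvd.dvd.mul_left ⟨d', hd'⟩ 2)
      rwa [hxz] at this
    have hgw : g ∣ w := by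
      apply dvd_of_sq_dvd_sq
      have h2 : g*g ∣ x*x := by rw [hx']; exact Nat.mul_dvd_mul ⟨x', rfl⟩ ⟨x', rfl⟩
      have h3 : g*g ∣ x*x + 3*d := by
        exact Nat.dvd_add h2 (Dvd.dvd.mul_left ⟨d', hd'⟩ 3)
      have h4 : x*x + 3*d = w*w := by omega
      rwa [h4] at h3
    obtain ⟨z', hz'⟩ := hgz
    obtain ⟨w', hw'⟩ := hgw
    have hgZ : ((g:ℤ)) ≠ 0 := by
      have : 0 < g := by omega
      exact_mod_cast this.ne'
    have cancel : ∀ u v : ℕ, (g*u)*(g*u) = (g*v)*(g*v) + (g*g)*d' → u*u = v*v + d' → True := fun _ _ _ _ => trivial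
    -- apply IH
    apply IH d' hd'lt hd'pos (x'*x') ⟨x', rfl⟩
    · refine ⟨y', ?_⟩
      have hZ : ((g:ℤ)*g) * ((x':ℤ)*x' + d') = ((g:ℤ)*g) * ((y':ℤ)*y') := by
        have h1 : ((x:ℤ))*x + d = ((y:ℤ))*y := by exact_mod_cast hxy
        have h2 : ((x:ℤ)) = g*x' := by exact_mod_cast hx'
        have h3 : ((y:ℤ)) = g*y' := by exact_mod_cast hy'
        have h4 : ((d:ℤ)) = (g:ℤ)*g*d' := by exact_mod_cast hd'
        rw [h2, h3, h4] at h1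
        linear_combination h1
      have := mul_left_cancel₀ (mul_ne_zero hgZ hgZ) hZ
      exact_mod_cast this
    · refine ⟨z', ?_⟩
      have hZ : ((g:ℤ)*g) * ((x':ℤ)*x' + 2*d') = ((g:ℤ)*g) * ((z':ℤ)*z') := by
        have h1 : ((x:ℤ))*x + 2*d = ((z:ℤ))*z := by exact_mod_cast hxz
        have h2 : ((x:ℤ)) = g*x' := by exact_mod_cast hx'
        have h3 : ((z:ℤ)) = g*z' := by exact_mod_cast hz'
        have h4 : ((d:ℤ)) = (g:ℤ)*g*d' := by exact_mod_cast hd'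
        rw [h2, h3, h4] at h1
        linear_combination h1
      have := mul_left_cancel₀ (mul_ne_zero hgZ hgZ) hZ
      exact_mod_cast this
    · refine ⟨w', ?_⟩
      have hZ : ((g:ℤ)*g) * ((x':ℤ)*x' + 3*d') = ((g:ℤ)*g) * ((w':ℤ)*w') := by
        have h1 : ((x:ℤ))*x + 3*d = ((w:ℤ))*w := by
          have h0 : x*x + 3*d = w*w := by omega
          exact_mod_cast h0
        have h2 : ((x:ℤ)) = g*x' := by exact_mod_cast hx'
        have h3 : ((w:ℤ)) = g*w' := by exact_mod_cast hw'
        have h4 : ((d:ℤ)) = (g:ℤ)*g*d' := by exact_mod_cast hd'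
        rw [h2, h3, h4] at h1
        linear_combination h1
      have := mul_left_cancel₀ (mul_ne_zero hgZ hgZ) hZ
      exact_mod_cast this

theorem no_four_term_ap_of_squares :
    ¬ ∃ (a d : ℕ), 0 < d ∧ IsSquare a ∧ IsSquare (a + d) ∧
      IsSquare (a + 2 * d) ∧ IsSquare (a + 3 * d) := by
  rintro ⟨a, d, hd, h1, h2, h3, h4⟩
  exact no_ap_aux d hd a h1 h2 h3 h4
end

section
/- Let Q be a finite set of perfect squares and suppose Q is contained in a generalized arithmetic progression P = {x₀ + t₁x₁ + ⋯ + t_K x_K : 0 ≤ t_i ≤ l_i} which is proper (i.e., all points are distinct, |P| = ∏(l_i+1)). Assume that for each i, the number of perfect squares in any one-dimensional progression {u + t·x_i : 0 ≤ t ≤ l_i} is at most (l_i+1)^{3/5}. Then |Q|^K ≤ |P|^{K - 2/5}. -/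
open Finset

theorem squares_in_proper_gap (K : ℕ) (hK : 1 ≤ K) (x₀ : ℤ) (x : Fin K → ℤ)
    (l : Fin K → ℕ) (P Q : Finset ℤ)
    (hP : P = (Fintype.piFinset fun i => Finset.range (l i + 1)).image
      (fun t : Fin K → ℕ => x₀ + ∑ i, (t i : ℤ) * x i))
    (hproper : P.card = ∏ i, (l i + 1))
    (hQP : Q ⊆ P) (hQsq : ∀ q ∈ Q, IsSquare q)
    (hBZ : ∀ (i : Fin K) (u : ℤ),
      ((((Finset.range (l i + 1)).image (fun t : ℕ => u + (t : ℤ) * x i)).filter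
          IsSquare).card : ℝ) ≤ ((l i + 1 : ℕ) : ℝ) ^ ((3 : ℝ) / 5)) :
    ((Q.card : ℝ)) ^ (K : ℕ) ≤ ((P.card : ℝ)) ^ ((K : ℝ) - 2 / 5) := by
  classical
  set f : (Fin K → ℕ) → ℤ := fun t => x₀ + ∑ j, (t j : ℤ) * x j with hf
  set G : Finset (Fin K → ℕ) := Fintype.piFinset fun i => Finset.range (l i + 1) with hGdef
  have hPG : P = G.image f := hP
  have hGcard : G.card = ∏ i, (l i + 1) := by
    simp [hGdef, Fintype.card_piFinset]
  have hinj : Set.InjOn f G := by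
    rw [← Finset.card_image_iff, ← hPG, hproper, hGcard]
  set T : Finset (Fin K → ℕ) := G.filter (fun t => f t ∈ Q) with hT
  have hTQ : T.image f = Q := by
    ext z
    simp only [hT, Finset.mem_image, Finset.mem_filter]
    constructor
    · rintro ⟨t, ⟨_, h⟩, rfl⟩; exact h
    · intro hz
      have hzP : z ∈ P := hQP hz
      rw [hPG] at hzP
      obtain ⟨t, ht, rfl⟩ := Finset.mem_image.mp hzP
      exact ⟨t, ⟨ht, hz⟩, rfl⟩
  have hQcard : Q.card = T.card := by
    rw [← hTQ]
    exact Finset.card_image_of_injOn (hinj.mono (Finset.filter_subset _ _))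
  have key : ∀ i : Fin K,
      (Q.card : ℝ) ≤ (P.card : ℝ) * ((l i + 1 : ℕ) : ℝ) ^ (-(2 : ℝ)/5) := by
    intro i
    have hNpos : (0 : ℝ) < ((l i + 1 : ℕ) : ℝ) := by positivity
    set G0 : Finset (Fin K → ℕ) := G.filter (fun b => b i = 0) with hG0
    have hG0card : G0.card * (l i + 1) = G.card := by
      have hG0eq : G0 = Fintype.piFinset
          (fun j => if j = i then ({0} : Finset ℕ) else Finset.range (l j + 1)) := by
        ext b
        simp only [hG0, Finset.mem_filter, hGdef, Fintype.mem_piFinset]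
        constructor
        · rintro ⟨h1, h2⟩ j
          by_cases hj : j = i
          · subst hj; simp [h2]
          · simp only [if_neg hj]; exact h1 j
        · intro h
          refine ⟨fun j => ?_, ?_⟩
          · by_cases hj : j = i
            · have h' := h j
              rw [if_pos hj] at h'
              simp only [Finset.mem_singleton] at h'
              simp [h']
            · have := h j; simpa [hj] using this
          · have := h i; simpa using this
      rw [hG0eq, Fintype.card_piFinset, hGcard]
      have hc : ∀ j, (if j = i then ({0} : Finset ℕ) else Finset.range (l j + 1)).card
          = if j = i then 1 else l j + 1 := by
        intro j; split <;> simp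
      rw [Finset.prod_congr rfl (fun j _ => hc j)]
      have hpr : (∏ j, if j = i then 1 else l j + 1)
          = ∏ j ∈ Finset.univ.erase i, (l j + 1) := by
        rw [← Finset.mul_prod_erase Finset.univ _ (Finset.mem_univ i)]
        simp only [eq_self_iff_true, if_true, one_mul]
        exact Finset.prod_congr rfl (fun j hj => if_neg (Finset.ne_of_mem_erase hj))
      rw [hpr, ← Finset.mul_prod_erase Finset.univ (fun j => l j + 1) (Finset.mem_univ i)]
      ring
    have hfib : T.card = ∑ b ∈ G0,
        (T.filter (fun t => Function.update t i 0 = b)).card := by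
      apply Finset.card_eq_sum_card_fiberwise
      intro t ht
      have htG : t ∈ G := (Finset.mem_filter.mp ht).1
      refine Finset.mem_filter.mpr ⟨?_, ?_⟩
      · rw [hGdef, Fintype.mem_piFinset] at htG ⊢
        intro j
        by_cases hj : j = i
        · subst hj
          simp [Function.update_self]
        · beta_reduce; rw [Function.update_of_ne hj]; exact htG j
      · simp [Function.update_self]
    have hfibbound : ∀ b ∈ G0,
        (((T.filter (fun t => Function.update t i 0 = b)).card : ℝ))
          ≤ ((l i + 1 : ℕ) : ℝ) ^ ((3 : ℝ)/5) := by
      intro b hb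
      obtain ⟨hbG, hbi⟩ := Finset.mem_filter.mp hb
      set F := T.filter (fun t => Function.update t i 0 = b) with hF
      have hFG : F ⊆ G := subset_trans (Finset.filter_subset _ _) (Finset.filter_subset _ _)
      have hcard : F.card = (F.image f).card :=
        (Finset.card_image_of_injOn (hinj.mono hFG)).symm
      have hsub : F.image f ⊆
          ((Finset.range (l i + 1)).image (fun c : ℕ => f b + (c : ℤ) * x i)).filter
            IsSquare := by
        intro z hz
        obtain ⟨t, htF, rfl⟩ := Finset.mem_image.mp hz
        obtain ⟨htT, htu⟩ := Finset.mem_filter.mp htF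
        obtain ⟨htG, htQ⟩ := Finset.mem_filter.mp htT
        have hval : f t = f b + (t i : ℤ) * x i := by
          have hbj : ∀ j, j ≠ i → b j = t j := by
            intro j hj; rw [← htu, Function.update_of_ne hj]
          have h1 : ∑ j, ((t j : ℤ) * x j - (b j : ℤ) * x j)
              = (t i : ℤ) * x i - (b i : ℤ) * x i := by
            apply Finset.sum_eq_single i
            · intro j _ hj; rw [hbj j hj]; ring
            · simp
          rw [Finset.sum_sub_distrib] at h1
          rw [hbi] at h1
          simp only [hf]
          push_cast at h1 ⊢
          linarith
        refine Finset.mem_filter.mpr ⟨?_, ?_⟩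
        · refine Finset.mem_image.mpr ⟨t i, ?_, hval.symm⟩
          rw [hGdef, Fintype.mem_piFinset] at htG
          exact htG i
        · exact hQsq _ htQ
      calc ((F.card : ℝ)) = ((F.image f).card : ℝ) := by rw [hcard]
        _ ≤ ((((Finset.range (l i + 1)).image
              (fun c : ℕ => f b + (c : ℤ) * x i)).filter IsSquare).card : ℝ) := by
            exact_mod_cast Finset.card_le_card hsub
        _ ≤ ((l i + 1 : ℕ) : ℝ) ^ ((3 : ℝ)/5) := hBZ i (f b)
    have h1 : (Q.card : ℝ) ≤ (G0.card : ℝ) * ((l i + 1 : ℕ) : ℝ) ^ ((3 : ℝ)/5) := by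
      rw [hQcard, hfib, Nat.cast_sum]
      calc (∑ b ∈ G0, ((T.filter (fun t => Function.update t i 0 = b)).card : ℝ))
          ≤ ∑ _b ∈ G0, ((l i + 1 : ℕ) : ℝ) ^ ((3 : ℝ)/5) :=
            Finset.sum_le_sum hfibbound
        _ = (G0.card : ℝ) * ((l i + 1 : ℕ) : ℝ) ^ ((3 : ℝ)/5) := by
            rw [Finset.sum_const, nsmul_eq_mul]
    have hPcardR : (P.card : ℝ) = (G0.card : ℝ) * ((l i + 1 : ℕ) : ℝ) := by
      have : P.card = G0.card * (l i + 1) := by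
        rw [hproper, ← hGcard, ← hG0card]
      exact_mod_cast congrArg (fun n : ℕ => (n : ℝ)) this
    have heq : (P.card : ℝ) * ((l i + 1 : ℕ) : ℝ) ^ (-(2 : ℝ)/5)
        = (G0.card : ℝ) * ((l i + 1 : ℕ) : ℝ) ^ ((3 : ℝ)/5) := by
      have h35 : (-(2 : ℝ)/5) = 3/5 - 1 := by norm_num
      rw [h35, Real.rpow_sub hNpos, Real.rpow_one, hPcardR]
      field_simp
    rw [heq]
    exact h1
  have hPpos : (0 : ℝ) < (P.card : ℝ) := by
    have hne : P.Nonempty := by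
      rw [hPG]
      refine Finset.Nonempty.image ?_ f
      exact ⟨fun _ => 0, by rw [hGdef]; simp [Fintype.mem_piFinset]⟩
    exact_mod_cast Finset.card_pos.mpr hne
  calc ((Q.card : ℝ)) ^ K = ∏ _i : Fin K, (Q.card : ℝ) := by simp
    _ ≤ ∏ i : Fin K, ((P.card : ℝ) * ((l i + 1 : ℕ) : ℝ) ^ (-(2 : ℝ)/5)) := by
        refine Finset.prod_le_prod (fun _ _ => by positivity) (fun i _ => key i)
    _ = (P.card : ℝ) ^ K * ∏ i : Fin K, ((l i + 1 : ℕ) : ℝ) ^ (-(2 : ℝ)/5) := by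
        rw [Finset.prod_mul_distrib]; simp
    _ = (P.card : ℝ) ^ K * (∏ i : Fin K, ((l i + 1 : ℕ) : ℝ)) ^ (-(2 : ℝ)/5) := by
        rw [← Real.finset_prod_rpow _ _ (fun i _ => by positivity)]
    _ = (P.card : ℝ) ^ K * (P.card : ℝ) ^ (-(2 : ℝ)/5) := by
        congr 2
        rw [hproper]
        push_cast
        rfl
    _ = (P.card : ℝ) ^ ((K : ℝ) - 2/5) := by
        rw [← Real.rpow_natCast ((P.card : ℝ)) K, ← Real.rpow_add hPpos]
        ring_nf
end

section
/- Let X ⊆ ℕ and 0 < α < 1, and suppose that for all x₀, d ≥ 1 and N ≥ 1, |X ∩ {x₀ + d·t : 1 ≤ t ≤ N}| ≤ N^α. Suppose further Chang's theorem holds (every finite A ⊂ ℤ with |A+A| ≤ K|A| lies in a proper ≤K-dimensional progression P with |P| ≤ |A|exp(CK²log³K)). Then there is a constant C' > 0 (depending on α and C) such that every nonempty finite X' ⊆ X satisfies |X'+X'| ≥ C'·|X'|·(log|X'|)^{1/4}. -/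
open Pointwise Finset

/-- `P` is a proper `d`-dimensional arithmetic progression in `ℤ`. -/
def IsProperGAP (P : Finset ℤ) (d : ℕ) : Prop :=
  ∃ (x₀ : ℤ) (x : Fin d → ℤ) (l : Fin d → ℕ),
    P = (Fintype.piFinset fun i => Finset.range (l i + 1)).image
      (fun t : Fin d → ℕ => x₀ + ∑ i, (t i : ℤ) * x i) ∧
    P.card = ∏ i, (l i + 1)

open Classical in
lemma ap_count_pos (X : Set ℕ) (α : ℝ) (hα0 : 0 < α)
    (hX : ∀ (x₀ d N : ℕ), 1 ≤ d → 1 ≤ N →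
      ((((Finset.Icc 1 N).filter (fun t => x₀ + d * t ∈ X)).card : ℝ) ≤ (N : ℝ) ^ α))
    (a s : ℤ) (hs : 0 < s) (L : ℕ) (hL : 1 ≤ L) :
    ((((Finset.range L).filter
        (fun c : ℕ => 0 ≤ a + (c : ℤ) * s ∧ (a + (c : ℤ) * s).toNat ∈ X)).card : ℝ))
      ≤ 2 * (L : ℝ) ^ α := by
  set F := (Finset.range L).filter
      (fun c : ℕ => 0 ≤ a + (c : ℤ) * s ∧ (a + (c : ℤ) * s).toNat ∈ X) with hFdef
  have hLα : (1 : ℝ) ≤ (L : ℝ) ^ α := by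
    apply Real.one_le_rpow (by exact_mod_cast hL) (le_of_lt hα0)
  rcases F.eq_empty_or_nonempty with hFe | hFe
  · rw [hFe]; simp; nlinarith
  · set c₀ := F.min' hFe with hc₀def
    have hc₀F : c₀ ∈ F := F.min'_mem hFe
    have hc₀ := (Finset.mem_filter.mp hc₀F).2
    set b := (a + (c₀ : ℤ) * s).toNat with hbdef
    have hb : (b : ℤ) = a + (c₀ : ℤ) * s := Int.toNat_of_nonneg hc₀.1
    set d := s.toNat with hddef
    have hd : (d : ℤ) = s := Int.toNat_of_nonneg hs.le
    have hd1 : 1 ≤ d := by omega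
    have key : (F.erase c₀).card ≤
        ((Finset.Icc 1 L).filter (fun t => b + d * t ∈ X)).card := by
      apply Finset.card_le_card_of_injOn (fun c => c - c₀)
      · intro c hc
        have hcF : c ∈ F := Finset.mem_of_mem_erase hc
        have hne : c ≠ c₀ := Finset.ne_of_mem_erase hc
        have hge : c₀ ≤ c := F.min'_le c hcF
        have hlt : c₀ < c := lt_of_le_of_ne hge (Ne.symm hne)
        have hcL : c < L := Finset.mem_range.mp (Finset.mem_filter.mp hcF).1
        have hcP := (Finset.mem_filter.mp hcF).2
        refine Finset.mem_filter.mpr ⟨Finset.mem_Icc.mpr ⟨Nat.sub_pos_of_lt hlt, le_trans (Nat.sub_le c c₀) hcL.le⟩, ?_⟩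
        have hcast : ((b + d * (c - c₀) : ℕ) : ℤ) = a + (c : ℤ) * s := by
          push_cast [Nat.cast_sub hge]
          rw [hb, hd]; ring
        have h2 : (a + (c : ℤ) * s).toNat = b + d * (c - c₀) := by omega
        rw [h2] at hcP
        exact hcP.2
      · intro c1 h1 c2 h2 h
        have g1 : c₀ ≤ c1 := F.min'_le c1 (Finset.mem_of_mem_erase h1)
        have g2 : c₀ ≤ c2 := F.min'_le c2 (Finset.mem_of_mem_erase h2)
        have h' : c1 - c₀ = c2 - c₀ := h
        omega
    have hcard : F.card = (F.erase c₀).card + 1 := by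
      rw [Finset.card_erase_of_mem hc₀F]
      have : 1 ≤ F.card := Finset.card_pos.mpr hFe
      omega
    have hXb := hX b d L hd1 hL
    have : ((F.erase c₀).card : ℝ) ≤ (L : ℝ) ^ α :=
      le_trans (by exact_mod_cast key) hXb
    rw [hcard]
    push_cast
    linarith

open Classical in
lemma ap_count (X : Set ℕ) (α : ℝ) (hα0 : 0 < α)
    (hX : ∀ (x₀ d N : ℕ), 1 ≤ d → 1 ≤ N →
      ((((Finset.Icc 1 N).filter (fun t => x₀ + d * t ∈ X)).card : ℝ) ≤ (N : ℝ) ^ α))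
    (a s : ℤ) (hs : s ≠ 0) (L : ℕ) (hL : 1 ≤ L) :
    ((((Finset.range L).filter
        (fun c : ℕ => 0 ≤ a + (c : ℤ) * s ∧ (a + (c : ℤ) * s).toNat ∈ X)).card : ℝ))
      ≤ 2 * (L : ℝ) ^ α := by
  rcases lt_or_gt_of_ne hs with hneg | hpos
  · have key : ((Finset.range L).filter
        (fun c : ℕ => 0 ≤ a + (c : ℤ) * s ∧ (a + (c : ℤ) * s).toNat ∈ X)).card ≤
        ((Finset.range L).filter
        (fun c : ℕ => 0 ≤ (a + (L - 1 : ℕ) * s) + (c : ℤ) * (-s) ∧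
          ((a + (L - 1 : ℕ) * s) + (c : ℤ) * (-s)).toNat ∈ X)).card := by
      apply Finset.card_le_card_of_injOn (fun c => L - 1 - c)
      · intro c hc
        have hcL : c < L := Finset.mem_range.mp (Finset.mem_filter.mp hc).1
        have hcP := (Finset.mem_filter.mp hc).2
        refine Finset.mem_filter.mpr ⟨Finset.mem_range.mpr (by show L - 1 - c < L; omega), ?_⟩
        have hval : (a + (L - 1 : ℕ) * s) + ((L - 1 - c : ℕ) : ℤ) * (-s)
            = a + (c : ℤ) * s := by
          push_cast [Nat.cast_sub (by omega : c ≤ L - 1), Nat.cast_sub (by omega : 1 ≤ L)]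
          ring
        rw [hval]; exact hcP
      · intro c1 h1 c2 h2 h
        have g1 : c1 < L := Finset.mem_range.mp (Finset.mem_filter.mp h1).1
        have g2 : c2 < L := Finset.mem_range.mp (Finset.mem_filter.mp h2).1
        have h' : L - 1 - c1 = L - 1 - c2 := h
        omega
    calc ((((Finset.range L).filter
        (fun c : ℕ => 0 ≤ a + (c : ℤ) * s ∧ (a + (c : ℤ) * s).toNat ∈ X)).card : ℝ))
        ≤ _ := by exact_mod_cast key
      _ ≤ 2 * (L : ℝ) ^ α :=
        ap_count_pos X α hα0 hX (a + (L - 1 : ℕ) * s) (-s) (by omega) L hL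
  · exact ap_count_pos X α hα0 hX a s hpos L hL

open Classical in
lemma gap_count (X : Set ℕ) (α : ℝ) (hα0 : 0 < α)
    (hX : ∀ (x₀ d N : ℕ), 1 ≤ d → 1 ≤ N →
      ((((Finset.Icc 1 N).filter (fun t => x₀ + d * t ∈ X)).card : ℝ) ≤ (N : ℝ) ^ α))
    (d : ℕ) (x₀ : ℤ) (x : Fin d → ℤ) (l : Fin d → ℕ)
    (hinj : Set.InjOn (fun t : Fin d → ℕ => x₀ + ∑ j, (t j : ℤ) * x j)
      (Fintype.piFinset fun j => Finset.range (l j + 1)))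
    (A : Finset ℤ)
    (hAX : ∀ z ∈ A, 0 ≤ z ∧ z.toNat ∈ X)
    (hAP : A ⊆ (Fintype.piFinset fun j => Finset.range (l j + 1)).image
      (fun t : Fin d → ℕ => x₀ + ∑ j, (t j : ℤ) * x j))
    (i : Fin d) :
    (A.card : ℝ) ≤ 2 * ((l i + 1 : ℕ) : ℝ) ^ α *
      ∏ j ∈ Finset.univ.erase i, ((l j + 1 : ℕ) : ℝ) := by
  set v := fun t : Fin d → ℕ => x₀ + ∑ j, (t j : ℤ) * x j with hv
  set S := Fintype.piFinset fun j => Finset.range (l j + 1) with hS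
  have hprodpos : (0:ℝ) < ∏ j ∈ Finset.univ.erase i, ((l j + 1 : ℕ) : ℝ) :=
    Finset.prod_pos fun j _ => by positivity
  have hLα1 : (1:ℝ) ≤ ((l i + 1 : ℕ) : ℝ) ^ α :=
    Real.one_le_rpow (by exact_mod_cast Nat.succ_le_succ (Nat.zero_le _)) hα0.le
  by_cases hxi : x i = 0
  · -- then l i = 0, else injectivity fails; in fact we show A.card ≤ ∏ over erase i
    -- simpler: injOn implies the map ignoring coordinate i is still injective enough
    have hli : l i = 0 := by
      by_contra h0
      have h1 : (fun _ => 0 : Fin d → ℕ) ∈ (S : Set (Fin d → ℕ)) := by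
        simp [hS, Fintype.mem_piFinset]
      have h2 : Function.update (fun _ => 0 : Fin d → ℕ) i 1 ∈ (S : Set (Fin d → ℕ)) := by
        simp only [hS, Finset.mem_coe, Fintype.mem_piFinset]
        intro j
        by_cases hj : j = i
        · subst hj; simp [Function.update_self]; omega
        · simp [Function.update_of_ne hj]
      have heq : v (fun _ => 0) = v (Function.update (fun _ => 0) i 1) := by
        simp only [hv]
        congr 1
        rw [Finset.sum_eq_zero, Finset.sum_eq_zero]
        · intro j _
          by_cases hj : j = i
          · subst hj; simp [Function.update_self, hxi]
          · simp [Function.update_of_ne hj]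
        · intro j _; simp
      have := hinj h1 h2 heq
      have := congrFun this i
      simp [Function.update_self] at this
    -- now the fiber over each element of erase i determines everything
    have key : A.card ≤ ∏ j ∈ Finset.univ.erase i, (l j + 1) := by
      have h1 : A.card ≤ S.card := by
        calc A.card ≤ (S.image v).card := Finset.card_le_card hAP
          _ ≤ S.card := Finset.card_image_le
      have h2 : S.card = ∏ j, (l j + 1) := by
        rw [hS, Fintype.card_piFinset]; simp
      have h3 : (∏ j, (l j + 1)) = (l i + 1) * ∏ j ∈ Finset.univ.erase i, (l j + 1) :=
        (Finset.mul_prod_erase _ _ (Finset.mem_univ i)).symm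
      rw [hli] at h3
      omega
    calc (A.card : ℝ) ≤ ∏ j ∈ Finset.univ.erase i, ((l j + 1 : ℕ) : ℝ) := by
          rw [← Nat.cast_prod]; exact_mod_cast key
      _ ≤ 2 * ((l i + 1 : ℕ) : ℝ) ^ α * ∏ j ∈ Finset.univ.erase i, ((l j + 1 : ℕ) : ℝ) := by
          nlinarith
  · -- main case
    set T := S.filter (fun t => v t ∈ A) with hT
    have hTS : T ⊆ S := Finset.filter_subset _ _
    have hTA : T.card = A.card := by
      have himg : T.image v = A := by
        have h1 : (S.image v).filter (· ∈ A) = (S.filter fun t => v t ∈ A).image v :=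
          Finset.filter_image
        rw [hT, ← h1, Finset.filter_mem_eq_inter, Finset.inter_eq_right.mpr hAP]
      rw [← himg]
      exact (Finset.card_image_of_injOn (hinj.mono (by exact_mod_cast hTS))).symm
    set B := Fintype.piFinset (fun j => if j = i then Finset.range 1
      else Finset.range (l j + 1)) with hB
    have hfib : ∀ t ∈ T, Function.update t i 0 ∈ B := by
      intro t ht
      have htS : t ∈ S := hTS ht
      rw [hB, Fintype.mem_piFinset]
      intro j
      by_cases hj : j = i
      · subst hj; simp [Function.update_self]
      · rw [if_neg hj, Function.update_of_ne hj]
        exact (Fintype.mem_piFinset.mp htS) j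
    have hTsum : T.card = ∑ s ∈ B, (T.filter fun t => Function.update t i 0 = s).card :=
      Finset.card_eq_sum_card_fiberwise hfib
    have hBcard : B.card = ∏ j ∈ Finset.univ.erase i, (l j + 1) := by
      rw [hB, Fintype.card_piFinset]
      rw [← Finset.mul_prod_erase _ _ (Finset.mem_univ i), if_pos rfl]
      rw [Finset.card_range, one_mul]
      exact Finset.prod_congr rfl fun j hj => by
        rw [if_neg (Finset.ne_of_mem_erase hj), Finset.card_range]
    have hfibcard : ∀ s ∈ B,
        (((T.filter fun t => Function.update t i 0 = s).card : ℝ))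
          ≤ 2 * ((l i + 1 : ℕ) : ℝ) ^ α := by
      intro s hs
      set a := x₀ + ∑ j ∈ Finset.univ.erase i, (s j : ℤ) * x j with ha
      have key : (T.filter fun t => Function.update t i 0 = s).card ≤
          ((Finset.range (l i + 1)).filter
            (fun c : ℕ => 0 ≤ a + (c : ℤ) * x i ∧ (a + (c : ℤ) * x i).toNat ∈ X)).card := by
        apply Finset.card_le_card_of_injOn (fun t => t i)
        · intro t ht
          obtain ⟨htT, hts⟩ := Finset.mem_filter.mp ht
          obtain ⟨htS, htA⟩ := Finset.mem_filter.mp htT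
          have hti : t i ∈ Finset.range (l i + 1) := (Fintype.mem_piFinset.mp htS) i
          have hvt : v t = a + (t i : ℤ) * x i := by
            have hsplit : ∑ j, (t j : ℤ) * x j
                = (t i : ℤ) * x i + ∑ j ∈ Finset.univ.erase i, (t j : ℤ) * x j :=
              (Finset.add_sum_erase Finset.univ (fun j => (t j : ℤ) * x j)
                (Finset.mem_univ i)).symm
            have hsum : ∑ j ∈ Finset.univ.erase i, (t j : ℤ) * x j
                = ∑ j ∈ Finset.univ.erase i, (s j : ℤ) * x j := by
              apply Finset.sum_congr rfl
              intro j hj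
              have : s j = t j := by
                rw [← hts, Function.update_of_ne (Finset.ne_of_mem_erase hj)]
              rw [this]
            show x₀ + ∑ j, (t j : ℤ) * x j = a + (t i : ℤ) * x i
            rw [hsplit, hsum, ha]; ring
          refine Finset.mem_filter.mpr ⟨hti, ?_⟩
          rw [← hvt]
          exact hAX _ htA
        · intro t1 h1 t2 h2 h
          have h1s := (Finset.mem_filter.mp h1).2
          have h2s := (Finset.mem_filter.mp h2).2
          funext j
          by_cases hj : j = i
          · subst hj; exact h
          · calc t1 j = Function.update t1 i 0 j := (Function.update_of_ne hj 0 t1).symm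
              _ = s j := by rw [h1s]
              _ = Function.update t2 i 0 j := by rw [h2s]
              _ = t2 j := Function.update_of_ne hj 0 t2
      have hap := ap_count X α hα0 hX a (x i) hxi (l i + 1) (by omega)
      have key' : (((T.filter fun t => Function.update t i 0 = s).card : ℝ))
          ≤ ((((Finset.range (l i + 1)).filter
            (fun c : ℕ => 0 ≤ a + (c : ℤ) * x i ∧ (a + (c : ℤ) * x i).toNat ∈ X)).card : ℝ)) := by
        exact_mod_cast key
      exact key'.trans hap
    -- combine
    have : (T.card : ℝ) ≤ (B.card : ℝ) * (2 * ((l i + 1 : ℕ) : ℝ) ^ α) := by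
      rw [hTsum, Nat.cast_sum]
      calc (∑ s ∈ B, ((T.filter fun t => Function.update t i 0 = s).card : ℝ))
          ≤ ∑ _s ∈ B, 2 * ((l i + 1 : ℕ) : ℝ) ^ α := Finset.sum_le_sum hfibcard
        _ = (B.card : ℝ) * (2 * ((l i + 1 : ℕ) : ℝ) ^ α) := by
            rw [Finset.sum_const, nsmul_eq_mul]
    rw [hTA] at this
    calc (A.card : ℝ) ≤ (B.card : ℝ) * (2 * ((l i + 1 : ℕ) : ℝ) ^ α) := this
      _ = 2 * ((l i + 1 : ℕ) : ℝ) ^ α * ∏ j ∈ Finset.univ.erase i, ((l j + 1 : ℕ) : ℝ) := by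
          rw [hBcard, Nat.cast_prod]
          ring

lemma log_cube_le (K : ℝ) (hK : 1 ≤ K) : (Real.log K) ^ 3 ≤ 27 * K := by
  have hK0 : (0:ℝ) < K := by linarith
  have h1 : Real.log K ≤ 3 * K ^ ((3:ℝ)⁻¹) := by
    have h2 : Real.log (K ^ ((3:ℝ)⁻¹)) ≤ K ^ ((3:ℝ)⁻¹) - 1 :=
      Real.log_le_sub_one_of_pos (Real.rpow_pos_of_pos hK0 _)
    rw [Real.log_rpow hK0] at h2
    nlinarith [Real.rpow_pos_of_pos hK0 ((3:ℝ)⁻¹)]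
  have h2 : (Real.log K) ^ 3 ≤ (3 * K ^ ((3:ℝ)⁻¹)) ^ 3 :=
    pow_le_pow_left₀ (Real.log_nonneg hK) h1 3
  have h3 : (K ^ ((3:ℝ)⁻¹)) ^ (3:ℕ) = K := by
    rw [← Real.rpow_natCast (K ^ ((3:ℝ)⁻¹)) 3, ← Real.rpow_mul hK0.le]
    norm_num
  calc (Real.log K) ^ 3 ≤ (3 * K ^ ((3:ℝ)⁻¹)) ^ 3 := h2
    _ = 27 * (K ^ ((3:ℝ)⁻¹)) ^ (3:ℕ) := by ring
    _ = 27 * K := by rw [h3]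

open Classical in
theorem thin_sets_conditional (X : Set ℕ) (α : ℝ) (hα0 : 0 < α) (hα1 : α < 1)
    (hX : ∀ (x₀ d N : ℕ), 1 ≤ d → 1 ≤ N →
      ((((Finset.Icc 1 N).filter (fun t => x₀ + d * t ∈ X)).card : ℝ) ≤ (N : ℝ) ^ α))
    (C : ℝ) (hC : 0 < C)
    (hChang : ∀ (A : Finset ℤ) (K : ℕ), 2 ≤ K →
      (A + A).card ≤ K * A.card →
      ∃ (P : Finset ℤ) (d : ℕ), d ≤ K ∧ A ⊆ P ∧ IsProperGAP P d ∧
        ((P.card : ℝ) ≤ (A.card : ℝ) * Real.exp (C * (K : ℝ) ^ 2 * (Real.log K) ^ 3))) :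
    ∃ C' > (0 : ℝ), ∀ X' : Finset ℕ, X'.Nonempty → (↑X' : Set ℕ) ⊆ X →
      C' * (X'.card : ℝ) * (Real.log X'.card) ^ ((1 : ℝ) / 4) ≤ ((X' + X').card : ℝ) := by
  have hα' : 0 < 1 - α := by linarith
  have hlog2 : 0 < Real.log 2 := Real.log_pos (by norm_num)
  set B : ℝ := (Real.log 2 + 27 * C) / (1 - α) with hBdef
  have hBpos : 0 < B := div_pos (by linarith) hα'
  set D : ℝ := 81 * B with hDdef
  have hDpos : 0 < D := by positivity
  have hD4 : 0 < D ^ ((1:ℝ)/4) := Real.rpow_pos_of_pos hDpos _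
  refine ⟨(D ^ ((1:ℝ)/4))⁻¹, inv_pos.mpr hD4, ?_⟩
  intro X' hne hsub
  set n := X'.card with hn
  set m := (X' + X').card with hm
  have hn1 : 1 ≤ n := Finset.card_pos.mpr hne
  have hmn : n ≤ m := Finset.card_le_card_add_right hne
  have hm1 : 1 ≤ m := le_trans hn1 hmn
  have hnR : (1:ℝ) ≤ (n:ℝ) := by exact_mod_cast hn1
  have hnR0 : (0:ℝ) < (n:ℝ) := by linarith
  have hmR : (n:ℝ) ≤ (m:ℝ) := by exact_mod_cast hmn
  -- the key claim
  have key : Real.log n ≤ D * ((m:ℝ)/(n:ℝ)) ^ 4 := by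
    set K := max (m / n + 1) 2 with hK
    have hK2 : 2 ≤ K := le_max_right _ _
    have hKm : m ≤ K * n := by
      have h1 : m ≤ (m / n + 1) * n := by
        have h1 := Nat.div_add_mod m n
        have h2 := Nat.mod_lt m (show 0 < n by omega)
        nlinarith [Nat.div_mul_le_self m n]
      calc m ≤ (m / n + 1) * n := h1
        _ ≤ K * n := Nat.mul_le_mul_right _ (le_max_left _ _)
    have hKR2 : (2:ℝ) ≤ (K:ℝ) := by exact_mod_cast hK2
    have hKR0 : (0:ℝ) < (K:ℝ) := by linarith
    -- K ≤ 3 m / n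
    have hK3 : (K:ℝ) ≤ 3 * ((m:ℝ)/(n:ℝ)) := by
      have h1 : ((m / n : ℕ) : ℝ) ≤ (m:ℝ)/(n:ℝ) := Nat.cast_div_le
      have h2 : (1:ℝ) ≤ (m:ℝ)/(n:ℝ) := (one_le_div hnR0).mpr hmR
      have h3 : (K:ℝ) = max (((m / n : ℕ) : ℝ) + 1) 2 := by
        rw [hK]; push_cast [Nat.cast_max]; ring_nf
      rw [h3]
      apply max_le <;> linarith
    -- Chang
    set A := X'.image (fun k : ℕ => (k:ℤ)) with hA
    have hAcard : A.card = n := Finset.card_image_of_injective _ (fun a b h => by exact_mod_cast h)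
    have hAAcard : (A + A).card = m := by
      have himg : (X' + X').image (fun k : ℕ => (k : ℤ)) = A + A := by
        rw [hA]; simpa using Finset.image_add (f := Nat.castRingHom ℤ) (s := X') (t := X')
      rw [← himg]
      exact Finset.card_image_of_injective _ (fun a b h => by exact_mod_cast h)
    obtain ⟨P, d, hdK, hAP, hGAP, hPcard⟩ := hChang A K hK2 (by rw [hAAcard, hAcard]; exact hKm)
    obtain ⟨x₀, x, l, hPeq, hPprod⟩ := hGAP
    rcases Nat.lt_or_ge n 2 with hn2 | hn2
    · have hone : n = 1 := by omega
      have : Real.log n = 0 := by rw [hone]; simp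
      rw [this]
      positivity
    · -- d ≥ 1
      have hd1 : 1 ≤ d := by
        by_contra h
        have hd0 : d = 0 := by omega
        subst hd0
        simp only [Finset.univ_eq_empty, Finset.prod_empty] at hPprod
        have : A.card ≤ P.card := Finset.card_le_card hAP
        omega
      have : Nonempty (Fin d) := ⟨⟨0, by omega⟩⟩
      obtain ⟨i, -, hmax⟩ := Finset.exists_max_image Finset.univ l Finset.univ_nonempty
      -- injectivity of the GAP parametrization
      have hinj : Set.InjOn (fun t : Fin d → ℕ => x₀ + ∑ j, (t j : ℤ) * x j)
          (Fintype.piFinset fun j => Finset.range (l j + 1)) := by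
        apply Finset.card_image_iff.mp
        rw [← hPeq, hPprod, Fintype.card_piFinset]
        simp
      have hAX : ∀ z ∈ A, 0 ≤ z ∧ z.toNat ∈ X := by
        intro z hz
        obtain ⟨k, hk, rfl⟩ := Finset.mem_image.mp hz
        exact ⟨by positivity, by simpa using hsub hk⟩
      have hgap := gap_count X α hα0 hX d x₀ x l hinj A hAX (hPeq ▸ hAP) i
      rw [hAcard] at hgap
      set L : ℕ := l i + 1 with hLdef
      have hL1 : 1 ≤ L := by omega
      have hLR1 : (1:ℝ) ≤ (L:ℝ) := by exact_mod_cast hL1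
      have hLRpos : (0:ℝ) < (L:ℝ) := by linarith
      set Q : ℝ := ∏ j ∈ Finset.univ.erase i, ((l j + 1 : ℕ) : ℝ) with hQdef
      have hQpos : 0 < Q := Finset.prod_pos fun j _ => by positivity
      have hPQ : (P.card : ℝ) = (L:ℝ) * Q := by
        rw [hPprod, hQdef, hLdef]
        rw [← Finset.mul_prod_erase _ _ (Finset.mem_univ i)]
        push_cast
        ring
      set E : ℝ := Real.exp (C * (K:ℝ) ^ 2 * (Real.log K) ^ 3) with hEdef
      have hEpos : 0 < E := Real.exp_pos _
      have hPE : (P.card : ℝ) ≤ (n:ℝ) * E := by rw [← hAcard]; exact_mod_cast hPcard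
      have hLαpos : (0:ℝ) < (L:ℝ) ^ α := Real.rpow_pos_of_pos hLRpos _
      -- L^{1-α} ≤ 2E
      have hL2E : (L:ℝ) ^ (1 - α) ≤ 2 * E := by
        have h1 : (n:ℝ) * L ≤ 2 * (L:ℝ) ^ α * ((n:ℝ) * E) := by
          calc (n:ℝ) * L ≤ (2 * (L:ℝ) ^ α * Q) * L :=
                mul_le_mul_of_nonneg_right hgap hLRpos.le
            _ = 2 * (L:ℝ) ^ α * ((L:ℝ) * Q) := by ring
            _ = 2 * (L:ℝ) ^ α * (P.card : ℝ) := by rw [hPQ]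
            _ ≤ 2 * (L:ℝ) ^ α * ((n:ℝ) * E) :=
                mul_le_mul_of_nonneg_left hPE (by positivity)
        have h2 : (L:ℝ) ^ ((1:ℝ) - α) = (L:ℝ) / (L:ℝ) ^ α := by
          rw [Real.rpow_sub hLRpos, Real.rpow_one]
        rw [h2, div_le_iff₀ hLαpos]
        have heq : 2 * (L:ℝ) ^ α * ((n:ℝ) * E) = (n:ℝ) * (2 * E * (L:ℝ) ^ α) := by ring
        rw [heq] at h1
        exact le_of_mul_le_mul_left h1 hnR0
      have hlogL : 0 ≤ Real.log L := Real.log_nonneg hLR1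
      have h2 : (1 - α) * Real.log L ≤ Real.log 2 + C * (K:ℝ) ^ 2 * (Real.log K) ^ 3 := by
        have h := Real.log_le_log (Real.rpow_pos_of_pos hLRpos _) hL2E
        rw [Real.log_rpow hLRpos] at h
        rwa [Real.log_mul (by norm_num) hEpos.ne', hEdef, Real.log_exp] at h
      -- n ≤ L^d
      have hnLd : (n:ℝ) ≤ (L:ℝ) ^ (d:ℕ) := by
        have h1 : n ≤ P.card := by rw [← hAcard]; exact Finset.card_le_card hAP
        have h2 : P.card ≤ L ^ d := by
          rw [hPprod]
          calc ∏ j, (l j + 1) ≤ L ^ Finset.univ.card :=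
                Finset.prod_le_pow_card _ _ _ (fun j _ => by
                  have := hmax j (Finset.mem_univ j); omega)
            _ = L ^ d := by rw [Finset.card_univ, Fintype.card_fin]
        exact_mod_cast le_trans h1 h2
      have h3 : Real.log n ≤ (K:ℝ) * Real.log L := by
        have h := Real.log_le_log hnR0 hnLd
        rw [Real.log_pow] at h
        have hdK' : (d:ℝ) ≤ (K:ℝ) := by exact_mod_cast hdK
        calc Real.log n ≤ (d:ℝ) * Real.log L := h
          _ ≤ (K:ℝ) * Real.log L := mul_le_mul_of_nonneg_right hdK' hlogL
      -- (log K)^3 ≤ 27 K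
      have hlogK0 : 0 ≤ Real.log K := Real.log_nonneg (by linarith)
      have hlogK3 : (Real.log K) ^ 3 ≤ 27 * (K:ℝ) := log_cube_le _ (by linarith)
      -- combine: log n ≤ B K^4
      have h4 : Real.log n ≤ B * (K:ℝ) ^ 4 := by
        have hKle : (K:ℝ) ≤ (K:ℝ) ^ 4 := le_self_pow₀ (by linarith) (by norm_num)
        have h5 : (1 - α) * Real.log n ≤ (1 - α) * ((K:ℝ) * Real.log L) :=
          mul_le_mul_of_nonneg_left h3 hα'.le
        have e1 : C * (K:ℝ) ^ 2 * (Real.log K) ^ 3 ≤ 27 * C * (K:ℝ) ^ 3 := by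
          have e0 := mul_le_mul_of_nonneg_left hlogK3
            (show (0:ℝ) ≤ C * (K:ℝ) ^ 2 by positivity)
          calc C * (K:ℝ) ^ 2 * (Real.log K) ^ 3
              = C * (K:ℝ) ^ 2 * (Real.log K) ^ 3 := rfl
            _ ≤ C * (K:ℝ) ^ 2 * (27 * (K:ℝ)) := e0
            _ = 27 * C * (K:ℝ) ^ 3 := by ring
        have h6 : (K:ℝ) * ((1 - α) * Real.log L)
            ≤ (K:ℝ) * (Real.log 2 + 27 * C * (K:ℝ) ^ 3) :=
          mul_le_mul_of_nonneg_left (by linarith) hKR0.le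
        have h7 : (K:ℝ) * (Real.log 2 + 27 * C * (K:ℝ) ^ 3)
            ≤ (Real.log 2 + 27 * C) * (K:ℝ) ^ 4 := by
          have e2 : Real.log 2 * (K:ℝ) ≤ Real.log 2 * (K:ℝ) ^ 4 :=
            mul_le_mul_of_nonneg_left hKle hlog2.le
          calc (K:ℝ) * (Real.log 2 + 27 * C * (K:ℝ) ^ 3)
              = Real.log 2 * (K:ℝ) + 27 * C * (K:ℝ) ^ 4 := by ring
            _ ≤ Real.log 2 * (K:ℝ) ^ 4 + 27 * C * (K:ℝ) ^ 4 := by linarith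
            _ = (Real.log 2 + 27 * C) * (K:ℝ) ^ 4 := by ring
        have e3 : (1 - α) * ((K:ℝ) * Real.log L) = (K:ℝ) * ((1 - α) * Real.log L) := by
          ring
        have h8 : (1 - α) * Real.log n ≤ (Real.log 2 + 27 * C) * (K:ℝ) ^ 4 := by
          rw [e3] at h5; linarith
        rw [hBdef, div_mul_eq_mul_div, le_div_iff₀ hα']
        linarith
      -- conclude key
      calc Real.log n ≤ B * (K:ℝ) ^ 4 := h4
        _ ≤ B * (3 * ((m:ℝ)/(n:ℝ))) ^ 4 := by
            apply mul_le_mul_of_nonneg_left _ hBpos.le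
            exact pow_le_pow_left₀ hKR0.le hK3 4
        _ = D * ((m:ℝ)/(n:ℝ)) ^ 4 := by rw [hDdef]; ring
  -- finish from key
  have hlogn0 : 0 ≤ Real.log n := Real.log_nonneg hnR
  have hmn0 : (0:ℝ) ≤ (m:ℝ)/(n:ℝ) := by positivity
  have hr : (Real.log n) ^ ((1:ℝ)/4) ≤ D ^ ((1:ℝ)/4) * ((m:ℝ)/(n:ℝ)) := by
    have h1 := Real.rpow_le_rpow hlogn0 key (by norm_num : (0:ℝ) ≤ 1/4)
    rwa [Real.mul_rpow hDpos.le (by positivity),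
      ← Real.rpow_natCast ((m:ℝ)/(n:ℝ)) 4, ← Real.rpow_mul hmn0,
      (by norm_num : ((4:ℕ):ℝ) * ((1:ℝ)/4) = 1), Real.rpow_one] at h1
  calc (D ^ ((1:ℝ)/4))⁻¹ * (n:ℝ) * (Real.log n) ^ ((1:ℝ)/4)
      ≤ (D ^ ((1:ℝ)/4))⁻¹ * (n:ℝ) * (D ^ ((1:ℝ)/4) * ((m:ℝ)/(n:ℝ))) := by
        apply mul_le_mul_of_nonneg_left hr (by positivity)
    _ = (m:ℝ) := by field_simp
end
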